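/- arXiv:2211.07844 — 7 statements merged into one kernel-verified Lean document; each statement's English description precedes it below -/
import Mathlib

section
/- Suppose φ: ℝ → ℝ is absolutely continuous on [-a, a] for every a > 0, polynomially bounded (there exist C > 0 and β ≥ 0 with |φ(x)| ≤ C(1 + |x|^β) for all x), and its almost-everywhere derivative φ′ lies in L²(ℝ, γ). Then the Hermite coefficients of φ′ satisfy μ_k(φ′) = √(k+1) · μ_{k+1}(φ) for all integers k ≥ 0. -/
open MeasureTheory ProbabilityTheory intervalIntegral

/-- The standard Gaussian measure on `ℝ`. -/
noncomputable def stdGauss : Measure ℝ := gaussianReal 0 1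

/-- The `k`-th normalized probabilist's Hermite polynomial `h_k = H_k / √(k!)`. -/
noncomputable def hermiteN (k : ℕ) (x : ℝ) : ℝ :=
  (Polynomial.aeval x (Polynomial.hermite k)) / Real.sqrt (Nat.factorial k)

/-- The `k`-th normalized probabilist's Hermite coefficient `μ_k(φ) = E[φ(Z) h_k(Z)]`. -/
noncomputable def hermCoeff (φ : ℝ → ℝ) (k : ℕ) : ℝ :=
  ∫ z, φ z * hermiteN k z ∂stdGauss


open Polynomial Filter Set
open scoped Interval

namespace HermAux

noncomputable def gw (x : ℝ) : ℝ := Real.exp (-(x^2/2))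

noncomputable def Hr (m : ℕ) (x : ℝ) : ℝ := aeval x (hermite m)

noncomputable def psi (m : ℕ) (x : ℝ) : ℝ := Hr m x * gw x

lemma gw_pos (x : ℝ) : 0 < gw x := Real.exp_pos _

lemma gw_eq (x : ℝ) : gw x = Real.exp (-(1/2) * x^2) := by
  unfold gw; ring_nf

lemma continuous_gw : Continuous gw := by
  unfold gw; fun_prop

lemma continuous_Hr (m : ℕ) : Continuous (Hr m) :=
  (Polynomial.differentiable_aeval (𝕜 := ℝ) (hermite m)).continuous

lemma continuous_psi (m : ℕ) : Continuous (psi m) :=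
  (continuous_Hr m).mul continuous_gw

lemma hasDerivAt_gw (x : ℝ) : HasDerivAt gw (-x * gw x) x := by
  have h : HasDerivAt (fun y : ℝ => -(y^2/2)) (-x) x := by
    have := ((hasDerivAt_pow 2 x).div_const 2).neg
    refine this.congr_deriv ?_
    simp
  have h2 := h.exp
  have : HasDerivAt gw (Real.exp (-(x^2/2)) * (-x)) x := h2
  simpa [mul_comm, gw] using this

lemma hermite_succ_eval (m : ℕ) (x : ℝ) :
    Hr (m+1) x = x * Hr m x - aeval x (derivative (hermite m)) := by
  unfold Hr
  rw [hermite_succ]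
  simp

lemma hasDerivAt_psi (m : ℕ) (x : ℝ) : HasDerivAt (psi m) (-psi (m+1) x) x := by
  have h1 : HasDerivAt (fun y => Hr m y) (aeval x (derivative (hermite m))) x := by
    have hd := ((Polynomial.differentiable_aeval (𝕜 := ℝ) (hermite m)) x).hasDerivAt
    rwa [Polynomial.deriv_aeval] at hd
  have := h1.mul (hasDerivAt_gw x)
  refine this.congr_deriv ?_
  rw [psi, hermite_succ_eval]
  unfold Hr gw
  ring

end HermAux
namespace HermAux

lemma pow_gauss_integrable (n : ℕ) {b : ℝ} (hb : 0 < b) :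
    Integrable (fun x : ℝ => x ^ n * Real.exp (-b * x^2)) := by
  have h := integrable_rpow_mul_exp_neg_mul_sq hb (s := (n : ℝ))
    (by exact_mod_cast (neg_one_lt_zero.trans_le (Nat.cast_nonneg n)))
  simpa [Real.rpow_natCast] using h

lemma poly_gauss_integrable (p : Polynomial ℝ) {b : ℝ} (hb : 0 < b) :
    Integrable (fun x : ℝ => p.eval x * Real.exp (-b * x^2)) := by
  have : (fun x : ℝ => p.eval x * Real.exp (-b * x^2)) =
      fun x => ∑ i ∈ Finset.range (p.natDegree + 1),
        p.coeff i * (x ^ i * Real.exp (-b * x^2)) := by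
    funext x
    rw [Polynomial.eval_eq_sum_range, Finset.sum_mul]
    congr 1; funext i; ring
  rw [this]
  exact integrable_finset_sum _ fun i _ => (pow_gauss_integrable i hb).const_mul _

lemma poly_abs_gauss_integrable (p : Polynomial ℝ) {b : ℝ} (hb : 0 < b) :
    Integrable (fun x : ℝ => |p.eval x| * Real.exp (-b * x^2)) := by
  have h := (poly_gauss_integrable p hb).abs
  refine h.congr ?_
  filter_upwards with x
  rw [abs_mul, abs_of_pos (Real.exp_pos _)]

lemma pow_gauss_tendsto_atTop (n : ℕ) {b : ℝ} (hb : 0 < b) :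
    Tendsto (fun x : ℝ => |x| ^ n * Real.exp (-b * x^2)) atTop (nhds 0) := by
  have ho := (rpow_mul_exp_neg_mul_sq_isLittleO_exp_neg hb (n : ℝ)).isBigO
  have hexp : Tendsto (fun x : ℝ => Real.exp (-(1/2) * x)) atTop (nhds 0) := by
    apply Real.tendsto_exp_atBot.comp
    exact Tendsto.const_mul_atTop_of_neg (by norm_num) tendsto_id
  have h := ho.trans_tendsto hexp
  apply h.congr'
  filter_upwards [eventually_ge_atTop (0:ℝ)] with x hx
  rw [Real.rpow_natCast, abs_of_nonneg hx]

lemma pow_gauss_tendsto_atBot (n : ℕ) {b : ℝ} (hb : 0 < b) :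
    Tendsto (fun x : ℝ => |x| ^ n * Real.exp (-b * x^2)) atBot (nhds 0) := by
  have h := (pow_gauss_tendsto_atTop n hb).comp tendsto_neg_atBot_atTop
  have : (fun x : ℝ => |x| ^ n * Real.exp (-b * x^2)) =
      (fun x : ℝ => |x| ^ n * Real.exp (-b * x^2)) ∘ (fun y : ℝ => -y) := by
    funext y; simp [Function.comp, neg_sq]
  rw [this]; exact h

lemma poly_gauss_tendsto (p : Polynomial ℝ) {b : ℝ} (hb : 0 < b) {l : Filter ℝ}
    (hl : ∀ n : ℕ, Tendsto (fun x : ℝ => |x| ^ n * Real.exp (-b * x^2)) l (nhds 0)) :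
    Tendsto (fun x : ℝ => p.eval x * Real.exp (-b * x^2)) l (nhds 0) := by
  apply squeeze_zero_norm (a := fun x => ∑ i ∈ Finset.range (p.natDegree + 1),
      |p.coeff i| * (|x| ^ i * Real.exp (-b * x^2)))
  · intro x
    rw [Real.norm_eq_abs, abs_mul, abs_of_pos (Real.exp_pos _)]
    calc |p.eval x| * Real.exp (-b * x^2)
        ≤ (∑ i ∈ Finset.range (p.natDegree + 1), |p.coeff i| * |x| ^ i)
            * Real.exp (-b * x^2) := by
          apply mul_le_mul_of_nonneg_right _ (Real.exp_pos _).le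
          rw [Polynomial.eval_eq_sum_range]
          refine (Finset.abs_sum_le_sum_abs _ _).trans ?_
          apply Finset.sum_le_sum
          intro i _
          rw [abs_mul, abs_pow]
      _ = _ := by rw [Finset.sum_mul]; congr 1; funext i; ring
  · have : Tendsto (fun x : ℝ => ∑ i ∈ Finset.range (p.natDegree + 1),
        |p.coeff i| * (|x| ^ i * Real.exp (-b * x^2))) l (nhds (∑ i ∈ Finset.range (p.natDegree + 1), |p.coeff i| * 0)) := by
      apply tendsto_finset_sum
      intro i _
      exact (hl i).const_mul _
    simpa using this

end HermAux
namespace HermAux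


noncomputable def HP (m : ℕ) : Polynomial ℝ := (hermite m).map (Int.castRingHom ℝ)

lemma Hr_eq_eval (m : ℕ) (x : ℝ) : Hr m x = (HP m).eval x := by
  unfold Hr HP
  rw [Polynomial.eval_map, Polynomial.aeval_def]
  rfl

lemma integrable_psi (m : ℕ) : Integrable (psi m) := by
  have h := poly_gauss_integrable (HP m) (b := 1/2) (by norm_num)
  refine h.congr ?_
  filter_upwards with x
  rw [psi, Hr_eq_eval, gw_eq]

lemma tendsto_psi_atTop (m : ℕ) : Tendsto (psi m) atTop (nhds 0) := by
  have h := poly_gauss_tendsto (HP m) (b := 1/2) (by norm_num)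
    (fun n => pow_gauss_tendsto_atTop n (by norm_num))
  apply h.congr
  intro x
  rw [psi, Hr_eq_eval, gw_eq]

lemma tendsto_psi_atBot (m : ℕ) : Tendsto (psi m) atBot (nhds 0) := by
  have h := poly_gauss_tendsto (HP m) (b := 1/2) (by norm_num)
    (fun n => pow_gauss_tendsto_atBot n (by norm_num))
  apply h.congr
  intro x
  rw [psi, Hr_eq_eval, gw_eq]

lemma integral_Ioi_psi (m : ℕ) (t : ℝ) : ∫ x in Ioi t, psi (m+1) x = psi m t := by
  have h := integral_Ioi_of_hasDerivAt_of_tendsto' (f := psi m)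
    (f' := fun x => -psi (m+1) x) (a := t) (m := 0)
    (fun x _ => hasDerivAt_psi m x)
    ((integrable_psi (m+1)).neg.integrableOn)
    (tendsto_psi_atTop m)
  rw [MeasureTheory.integral_neg] at h
  linarith [h]

lemma integral_Iic_psi (m : ℕ) (t : ℝ) : ∫ x in Iic t, psi (m+1) x = -psi m t := by
  have h := integral_Iic_of_hasDerivAt_of_tendsto' (f := psi m)
    (f' := fun x => -psi (m+1) x) (a := t) (m := 0)
    (fun x _ => hasDerivAt_psi m x)
    ((integrable_psi (m+1)).neg.integrableOn)
    (tendsto_psi_atBot m)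
  rw [MeasureTheory.integral_neg] at h
  linarith [h]

lemma integral_Ici_psi (m : ℕ) (t : ℝ) : ∫ x in Ici t, psi (m+1) x = psi m t := by
  rw [← integral_Ioi_psi m t]
  exact setIntegral_congr_set Ioi_ae_eq_Ici.symm

lemma integral_Iio_psi (m : ℕ) (t : ℝ) : ∫ x in Iio t, psi (m+1) x = -psi m t := by
  rw [← integral_Iic_psi m t]
  exact setIntegral_congr_set Iio_ae_eq_Iic

lemma integral_psi_eq_zero (m : ℕ) : ∫ x, psi (m+1) x = 0 := by
  rw [← intervalIntegral.integral_Iic_add_Ioi (b := 0)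
    (integrable_psi (m+1)).integrableOn (integrable_psi (m+1)).integrableOn,
    integral_Iic_psi, integral_Ioi_psi]
  ring

end HermAux
namespace HermAux

lemma pdf_eq (x : ℝ) : gaussianPDFReal 0 1 x = (Real.sqrt (2*Real.pi))⁻¹ * gw x := by
  rw [gaussianPDFReal, gw]
  push_cast
  norm_num
  left
  ring

lemma integral_stdGauss (F : ℝ → ℝ) :
    ∫ x, F x ∂stdGauss = ∫ x, gaussianPDFReal 0 1 x * F x := by
  rw [stdGauss, gaussianReal_of_var_ne_zero _ one_ne_zero]
  have hd : gaussianPDF 0 1 = fun x => ((Real.toNNReal (gaussianPDFReal 0 1 x) : NNReal) : ENNReal) := rfl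
  rw [hd, integral_withDensity_eq_integral_smul ((measurable_gaussianPDFReal 0 1).real_toNNReal) F]
  congr 1
  funext x
  rw [NNReal.smul_def, Real.coe_toNNReal _ (gaussianPDFReal_nonneg 0 1 x)]
  rfl

lemma integrable_stdGauss_iff (g : ℝ → ℝ) :
    Integrable g stdGauss ↔ Integrable (fun x => g x * gaussianPDFReal 0 1 x) volume := by
  rw [stdGauss, gaussianReal_of_var_ne_zero _ one_ne_zero, gaussianPDF_def]
  rw [integrable_withDensity_iff ((measurable_gaussianPDFReal 0 1).ennreal_ofReal)
    (ae_of_all _ fun x => ENNReal.ofReal_lt_top)]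
  simp_rw [ENNReal.toReal_ofReal (gaussianPDFReal_nonneg 0 1 _)]

lemma hermCoeff_eq (g : ℝ → ℝ) (m : ℕ) :
    hermCoeff g m = (Real.sqrt (2*Real.pi))⁻¹ *
      ((Real.sqrt (Nat.factorial m))⁻¹ * ∫ x, g x * psi m x) := by
  rw [hermCoeff, integral_stdGauss]
  rw [show (fun x => gaussianPDFReal 0 1 x * (g x * hermiteN m x)) =
      fun x => (Real.sqrt (2*Real.pi))⁻¹ * ((Real.sqrt (Nat.factorial m))⁻¹ * (g x * psi m x)) by
    funext x
    rw [pdf_eq, hermiteN, psi]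
    unfold Hr
    simp only [div_eq_mul_inv]
    ring]
  rw [MeasureTheory.integral_const_mul, MeasureTheory.integral_const_mul]

end HermAux
namespace HermAux

lemma abs_le_add_sq_div (a b : ℝ) (hb : 0 < b) : |a| ≤ b + a^2 / b := by
  have h := sq_nonneg (|a| - b)
  have h2 : |a|^2 = a^2 := sq_abs a
  have key : |a| * b ≤ b^2 + a^2 := by nlinarith
  have hdiv : b + a^2/b = (b^2 + a^2)/b := by field_simp
  rw [hdiv, le_div_iff₀ hb]
  linarith

lemma uIoc_sq_le {x t : ℝ} (ht : t ∈ Ι 0 x) : t^2 ≤ x^2 := by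
  rcases le_total 0 x with h | h
  · rw [uIoc_of_le h] at ht
    exact sq_le_sq' (by linarith [ht.1, ht.2]) ht.2
  · rw [uIoc_comm, uIoc_of_le h] at ht
    nlinarith [ht.1, ht.2]

lemma Ibound (φd : ℝ → ℝ) (hloc : ∀ a b : ℝ, IntervalIntegrable φd volume a b)
    (hsq : Integrable (fun t => φd t^2 * gw t)) (x : ℝ) :
    ∫ t in Ι 0 x, |φd t| ≤ (|x| + ∫ t, φd t^2 * gw t) * Real.exp (x^2/4) := by
  set C2 := ∫ t, φd t^2 * gw t with hC2def
  have hC2 : 0 ≤ C2 := integral_nonneg fun t => mul_nonneg (sq_nonneg _) (gw_pos t).le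
  have hfin : volume (Ι 0 x) < ⊤ := by
    rw [Set.uIoc]; exact measure_Ioc_lt_top
  have hconst : IntegrableOn (fun _ : ℝ => Real.exp (x^2/4)) (Ι 0 x) volume :=
    integrableOn_const hfin.ne
  have hrhs : IntegrableOn (fun t => Real.exp (x^2/4) + φd t^2 * gw t * Real.exp (x^2/4))
      (Ι 0 x) volume :=
    hconst.add (hsq.mul_const _).integrableOn
  have step1 : ∫ t in Ι 0 x, |φd t| ≤
      ∫ t in Ι 0 x, (Real.exp (x^2/4) + φd t^2 * gw t * Real.exp (x^2/4)) := by
    refine setIntegral_mono_on ((hloc 0 x).abs.def') hrhs measurableSet_uIoc ?_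
    intro t ht
    have ht2 : t^2 ≤ x^2 := uIoc_sq_le ht
    have hexple : Real.exp (t^2/4) ≤ Real.exp (x^2/4) := Real.exp_le_exp.mpr (by linarith)
    have h1 : |φd t| ≤ Real.exp (t^2/4) + φd t^2 / Real.exp (t^2/4) :=
      abs_le_add_sq_div _ _ (Real.exp_pos _)
    have h2 : φd t^2 / Real.exp (t^2/4) = φd t^2 * gw t * Real.exp (t^2/4) := by
      rw [div_eq_iff (Real.exp_pos _).ne', gw, mul_assoc, mul_assoc, ← Real.exp_add,
        ← Real.exp_add, show -(t^2/2) + (t^2/4 + t^2/4) = 0 by ring, Real.exp_zero, mul_one]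
    have h3 : φd t^2 * gw t * Real.exp (t^2/4) ≤ φd t^2 * gw t * Real.exp (x^2/4) :=
      mul_le_mul_of_nonneg_left hexple (mul_nonneg (sq_nonneg _) (gw_pos t).le)
    calc |φd t| ≤ Real.exp (t^2/4) + φd t^2 / Real.exp (t^2/4) := h1
      _ = Real.exp (t^2/4) + φd t^2 * gw t * Real.exp (t^2/4) := by rw [h2]
      _ ≤ Real.exp (x^2/4) + φd t^2 * gw t * Real.exp (x^2/4) := add_le_add hexple h3
  have step2 : ∫ t in Ι 0 x, (Real.exp (x^2/4) + φd t^2 * gw t * Real.exp (x^2/4)) =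
      |x| * Real.exp (x^2/4) + (∫ t in Ι 0 x, φd t^2 * gw t) * Real.exp (x^2/4) := by
    rw [integral_add hconst (hsq.mul_const _).integrableOn, setIntegral_const,
      MeasureTheory.integral_mul_const, smul_eq_mul]
    congr 1
    rw [Set.uIoc, Real.volume_real_Ioc_of_le min_le_max]
    simp [max_sub_min_eq_abs]
  have step3 : ∫ t in Ι 0 x, φd t^2 * gw t ≤ C2 :=
    setIntegral_le_integral hsq (Filter.Eventually.of_forall fun t =>
      mul_nonneg (sq_nonneg _) (gw_pos t).le)
  have := step1.trans (le_of_eq step2)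
  have h4 : (∫ t in Ι 0 x, φd t^2 * gw t) * Real.exp (x^2/4) ≤ C2 * Real.exp (x^2/4) :=
    mul_le_mul_of_nonneg_right step3 (Real.exp_pos _).le
  nlinarith [Real.exp_pos (x^2/4)]

lemma PhiBound (φd : ℝ → ℝ) (hloc : ∀ a b : ℝ, IntervalIntegrable φd volume a b)
    (hsq : Integrable (fun t => φd t^2 * gw t)) (x : ℝ) :
    |∫ t in (0:ℝ)..x, φd t| ≤ (|x| + ∫ t, φd t^2 * gw t) * Real.exp (x^2/4) := by
  have h := intervalIntegral.norm_integral_le_integral_norm_uIoc (f := φd) (a := 0) (b := x)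
    (μ := volume)
  simp only [Real.norm_eq_abs] at h
  exact h.trans (Ibound φd hloc hsq x)

end HermAux

open HermAux in
/-- If `φ` is absolutely continuous on every compact interval (expressed via the
fundamental theorem of calculus with a locally integrable a.e. derivative `φd`),
polynomially bounded, and `φd ∈ L²(ℝ, γ)`, then `μ_k(φ′) = √(k+1) μ_{k+1}(φ)`. -/
theorem hermite_coeff_of_derivative
    (φ φd : ℝ → ℝ)
    (hloc : ∀ a b : ℝ, IntervalIntegrable φd volume a b)
    (hFTC : ∀ x : ℝ, φ x = φ 0 + ∫ t in (0 : ℝ)..x, φd t)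
    (C β : ℝ) (hC : 0 < C) (hβ : 0 ≤ β)
    (hpoly : ∀ x : ℝ, |φ x| ≤ C * (1 + |x| ^ β))
    (hL2 : MemLp φd 2 stdGauss) :
    ∀ k : ℕ, hermCoeff φd k = Real.sqrt (k + 1) * hermCoeff φ (k + 1) := by
  intro k
  classical
  haveI : IsProbabilityMeasure stdGauss := by unfold stdGauss; infer_instance
  set Φ : ℝ → ℝ := fun x => ∫ t in (0:ℝ)..x, φd t with hΦdef
  -- measurability of φd
  have hφd_loc : LocallyIntegrable φd volume := by
    intro x
    exact ⟨Ioo (x-1) (x+1), Ioo_mem_nhds (by linarith) (by linarith),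
      (hloc (x-1) (x+1)).1.mono_set Ioo_subset_Ioc_self⟩
  have hφd_meas : AEStronglyMeasurable φd volume := hφd_loc.aestronglyMeasurable
  -- square integrability w.r.t. volume
  have hsq : Integrable (fun t => φd t^2 * gw t) volume := by
    have h2 : Integrable (fun t => φd t^2) stdGauss := hL2.integrable_sq
    have h3 := (integrable_stdGauss_iff (fun t => φd t^2)).mp h2
    have h4 := h3.const_mul (Real.sqrt (2*Real.pi))
    refine h4.congr ?_
    filter_upwards with t
    rw [pdf_eq]
    have hne : Real.sqrt (2*Real.pi) ≠ 0 := by positivity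
    field_simp
  set C2 : ℝ := ∫ t, φd t^2 * gw t with hC2def
  have hC2 : 0 ≤ C2 := integral_nonneg fun t => mul_nonneg (sq_nonneg _) (gw_pos t).le
  have hPhiB : ∀ x, |Φ x| ≤ (|x| + C2) * Real.exp (x^2/4) := fun x => PhiBound φd hloc hsq x
  have hΦcont : Continuous Φ := intervalIntegral.continuous_primitive hloc 0
  -- dominating function
  set g : ℝ → ℝ := fun x => (|x| + C2) * (|(HP (k+1)).eval x| * Real.exp (-(1/4) * x^2))
    with hgdef
  have hgint : Integrable g volume := by
    have h1 : Integrable (fun x => |(Polynomial.X * HP (k+1)).eval x| * Real.exp (-(1/4) * x^2))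
        volume := poly_abs_gauss_integrable _ (by norm_num)
    have h2 : Integrable (fun x => |(HP (k+1)).eval x| * Real.exp (-(1/4) * x^2)) volume :=
      poly_abs_gauss_integrable _ (by norm_num)
    refine (h1.add (h2.const_mul C2)).congr ?_
    filter_upwards with x
    simp only [hgdef, Polynomial.eval_mul, Polynomial.eval_X, abs_mul, Pi.add_apply]
    ring
  have habs : ∀ (m : ℕ) (x : ℝ), |psi m x| = |Hr m x| * gw x := fun m x => by
    rw [psi, abs_mul, abs_of_pos (gw_pos x)]
  have hKey : ∀ x : ℝ, (|x| + C2) * Real.exp (x^2/4) * |psi (k+1) x| = g x := by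
    intro x
    have hexp : Real.exp (x^2/4) * Real.exp (-(x^2/2)) = Real.exp (-(1/4) * x^2) := by
      rw [← Real.exp_add]; congr 1; ring
    rw [habs, Hr_eq_eval, hgdef]
    show (|x| + C2) * Real.exp (x^2/4) * (|(HP (k+1)).eval x| * Real.exp (-(x^2/2)))
        = (|x| + C2) * (|(HP (k+1)).eval x| * Real.exp (-(1/4) * x^2))
    rw [← hexp]; ring
  have hΦψint : Integrable (fun x => Φ x * psi (k+1) x) volume := by
    refine hgint.mono' ((hΦcont.mul (continuous_psi (k+1))).aestronglyMeasurable) ?_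
    filter_upwards with x
    rw [Real.norm_eq_abs, abs_mul, ← hKey x]
    exact mul_le_mul_of_nonneg_right (hPhiB x) (abs_nonneg _)
  -- Fubini
  set S₁ : Set (ℝ×ℝ) := {p | 0 < p.2 ∧ p.2 ≤ p.1} with hS₁def
  set S₂ : Set (ℝ×ℝ) := {p | p.1 < p.2 ∧ p.2 ≤ 0} with hS₂def
  have hS₁m : MeasurableSet S₁ :=
    (measurableSet_lt measurable_const measurable_snd).inter
      (measurableSet_le measurable_snd measurable_fst)
  have hS₂m : MeasurableSet S₂ :=
    (measurableSet_lt measurable_fst measurable_snd).inter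
      (measurableSet_le measurable_snd measurable_const)
  set G : ℝ × ℝ → ℝ := fun p => psi (k+1) p.1 * φd p.2 with hGdef
  set F : ℝ × ℝ → ℝ := fun p => S₁.indicator G p - S₂.indicator G p with hFdef
  have hGsm : AEStronglyMeasurable G (volume.prod volume) := by
    refine AEStronglyMeasurable.mul ?_ ?_
    · exact ((continuous_psi (k+1)).comp continuous_fst).aestronglyMeasurable
    · exact hφd_meas.comp_quasiMeasurePreserving Measure.quasiMeasurePreserving_snd
  have hFsm : AEStronglyMeasurable F (volume.prod volume) :=
    (hGsm.indicator hS₁m).sub (hGsm.indicator hS₂m)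
  -- sections in t
  have hsecT : ∀ x : ℝ, (fun t => F (x, t)) =
      fun t => (Ioc (0:ℝ) x).indicator (fun t => psi (k+1) x * φd t) t
        - (Ioc x 0).indicator (fun t => psi (k+1) x * φd t) t := by
    intro x; funext t
    simp only [hFdef, hGdef, hS₁def, hS₂def, Set.indicator_apply, Set.mem_setOf_eq, Set.mem_Ioc]
  have hsecTint : ∀ x : ℝ, Integrable (fun t => F (x, t)) volume := by
    intro x
    rw [hsecT x]
    exact (MeasureTheory.IntegrableOn.integrable_indicator ((hloc 0 x).1.const_mul _) measurableSet_Ioc).sub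
      (MeasureTheory.IntegrableOn.integrable_indicator ((hloc x 0).1.const_mul _) measurableSet_Ioc)
  have hsecTval : ∀ x : ℝ, (∫ t, F (x, t)) = psi (k+1) x * Φ x := by
    intro x
    rw [hsecT x, integral_sub
      (MeasureTheory.IntegrableOn.integrable_indicator ((hloc 0 x).1.const_mul _) measurableSet_Ioc)
      (MeasureTheory.IntegrableOn.integrable_indicator ((hloc x 0).1.const_mul _) measurableSet_Ioc),
      MeasureTheory.integral_indicator measurableSet_Ioc, MeasureTheory.integral_indicator measurableSet_Ioc,
      MeasureTheory.integral_const_mul, MeasureTheory.integral_const_mul]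
    have : Φ x = (∫ t in Ioc (0:ℝ) x, φd t) - ∫ t in Ioc x 0, φd t := rfl
    rw [this]; ring
  -- sections in x
  have hsecX : ∀ t : ℝ, (∫ x, F (x, t)) = φd t * psi k t := by
    intro t
    rcases lt_or_ge 0 t with ht | ht
    · have : (fun x => F (x, t)) = fun x => (Ici t).indicator (fun x => psi (k+1) x * φd t) x := by
        funext x
        simp only [hFdef, hGdef, hS₁def, hS₂def, Set.indicator_apply, Set.mem_setOf_eq,
          Set.mem_Ici, Set.mem_Iio]
        have h2 : ¬(x < t ∧ t ≤ 0) := fun h => absurd ht (not_lt.mpr h.2)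
        simp [ht, h2]
      rw [this, MeasureTheory.integral_indicator measurableSet_Ici, MeasureTheory.integral_mul_const, integral_Ici_psi]
      ring
    · have : (fun x => F (x, t)) = fun x => -((Iio t).indicator (fun x => psi (k+1) x * φd t) x) := by
        funext x
        simp only [hFdef, hGdef, hS₁def, hS₂def, Set.indicator_apply, Set.mem_setOf_eq,
          Set.mem_Iio]
        have h1 : ¬(0 < t ∧ t ≤ x) := fun h => absurd ht (not_le.mpr h.1)
        simp [ht, h1]
      rw [this, MeasureTheory.integral_neg, MeasureTheory.integral_indicator measurableSet_Iio,
        MeasureTheory.integral_mul_const, integral_Iio_psi]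
      ring
  -- integrability of F on the product space
  have hnormbound : ∀ x : ℝ, (∫ t, ‖F (x, t)‖) ≤ g x := by
    intro x
    have hIoc : ∀ (a b : ℝ), (fun t => ‖(Ioc a b).indicator (fun t => psi (k+1) x * φd t) t‖)
        = (Ioc a b).indicator (fun t => |psi (k+1) x| * |φd t|) := by
      intro a b; funext t
      simp only [Set.indicator_apply]
      split <;> simp [abs_mul]
    rcases le_or_gt 0 x with hx | hx
    · have hempty : Ioc x (0:ℝ) = ∅ := Ioc_eq_empty (by simpa using hx)
      have heq : (fun t => ‖F (x, t)‖) = (Ioc (0:ℝ) x).indicator (fun t => |psi (k+1) x| * |φd t|) := by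
        rw [← hIoc]
        funext t
        rw [congrFun (hsecT x) t]
        simp [hempty]
      rw [heq, MeasureTheory.integral_indicator measurableSet_Ioc, MeasureTheory.integral_const_mul, ← uIoc_of_le hx]
      rw [← hKey x]
      have h := Ibound φd hloc hsq x
      calc |psi (k+1) x| * ∫ t in Ι (0:ℝ) x, |φd t|
          ≤ |psi (k+1) x| * ((|x| + C2) * Real.exp (x^2/4)) :=
            mul_le_mul_of_nonneg_left h (abs_nonneg _)
        _ = (|x| + C2) * Real.exp (x^2/4) * |psi (k+1) x| := by ring
    · have hempty : Ioc (0:ℝ) x = ∅ := Ioc_eq_empty (by simpa using hx.le)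
      have heq : (fun t => ‖F (x, t)‖) = (Ioc x (0:ℝ)).indicator (fun t => |psi (k+1) x| * |φd t|) := by
        rw [← hIoc]
        funext t
        rw [congrFun (hsecT x) t]
        simp [hempty]
      have huIoc : Ioc x (0:ℝ) = Ι (0:ℝ) x := by
        rw [uIoc_comm, uIoc_of_le hx.le]
      rw [heq, MeasureTheory.integral_indicator measurableSet_Ioc, MeasureTheory.integral_const_mul, huIoc]
      rw [← hKey x]
      have h := Ibound φd hloc hsq x
      calc |psi (k+1) x| * ∫ t in Ι (0:ℝ) x, |φd t|
          ≤ |psi (k+1) x| * ((|x| + C2) * Real.exp (x^2/4)) :=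
            mul_le_mul_of_nonneg_left h (abs_nonneg _)
        _ = (|x| + C2) * Real.exp (x^2/4) * |psi (k+1) x| := by ring
  have hFint : Integrable F (volume.prod volume) := by
    rw [integrable_prod_iff hFsm]
    constructor
    · exact Filter.Eventually.of_forall hsecTint
    · refine hgint.mono' (hFsm.norm.integral_prod_right') ?_
      filter_upwards with x
      rw [Real.norm_eq_abs, abs_of_nonneg (integral_nonneg fun t => norm_nonneg _)]
      exact hnormbound x
  have hswap : (∫ x, ∫ t, F (x, t)) = ∫ t, ∫ x, F (x, t) := by
    apply MeasureTheory.integral_integral_swap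
    exact hFint.congr (Filter.Eventually.of_forall fun p => rfl)
  have hmain : (∫ x, Φ x * psi (k+1) x) = ∫ t, φd t * psi k t := by
    calc (∫ x, Φ x * psi (k+1) x) = ∫ x, psi (k+1) x * Φ x := by
          congr 1; funext x; ring
      _ = ∫ x, ∫ t, F (x, t) := by congr 1; funext x; rw [hsecTval x]
      _ = ∫ t, ∫ x, F (x, t) := hswap
      _ = ∫ t, φd t * psi k t := by congr 1; funext t; rw [hsecX t]
  -- replace φ by its FTC decomposition
  have hphi : (∫ x, φ x * psi (k+1) x) = ∫ x, φd x * psi k x := by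
    have h6 : (fun x => φ x * psi (k+1) x)
        = fun x => φ 0 * psi (k+1) x + Φ x * psi (k+1) x := by
      funext x; rw [hFTC x]; ring
    rw [h6, integral_add ((integrable_psi (k+1)).const_mul (φ 0)) hΦψint,
      MeasureTheory.integral_const_mul, integral_psi_eq_zero, mul_zero, zero_add, hmain]
  -- final numeric assembly
  rw [hermCoeff_eq φd k, hermCoeff_eq φ (k+1), hphi]
  have hfact : Real.sqrt ((Nat.factorial (k+1) : ℕ) : ℝ)
      = Real.sqrt ((k:ℝ)+1) * Real.sqrt ((Nat.factorial k : ℕ) : ℝ) := by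
    rw [← Real.sqrt_mul (by positivity)]
    congr 1
    rw [Nat.factorial_succ]; push_cast; ring
  rw [hfact]
  have h1 : (0:ℝ) < Real.sqrt ((k:ℝ)+1) := Real.sqrt_pos.mpr (by positivity)
  have h2 : (0:ℝ) < Real.sqrt ((Nat.factorial k : ℕ) : ℝ) :=
    Real.sqrt_pos.mpr (by exact_mod_cast Nat.factorial_pos k)
  push_cast
  field_simp
end

section
/- Let X ∈ ℝ^{n×d} be a matrix whose rows all have unit Euclidean norm, and let (c_i)_{i≥0} be nonnegative real coefficients with c_0 > 0 and Σ_{i=0}^∞ c_i < ∞. Define the kernel matrix K ∈ ℝ^{n×n} by n K = Σ_{i=0}^∞ c_i (X Xᵀ)^{⊙i}. Then the effective rank of K satisfies Tr(K)/λ_1(K) ≤ (Σ_{i=0}^∞ c_i)/c_0. -/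
open MeasureTheory Matrix

/-- The largest eigenvalue of a symmetric matrix, expressed as the supremum of the
Rayleigh quotient over the unit sphere. -/
noncomputable def lamMax {n : ℕ} (A : Matrix (Fin n) (Fin n) ℝ) : ℝ :=
  sSup {t | ∃ u : Fin n → ℝ, (∑ i, u i ^ 2) = 1 ∧ t = ∑ i, ∑ j, u i * A i j * u j}

lemma sum_sum_pow_nonneg {n d : ℕ} (X : Matrix (Fin n) (Fin d) ℝ) (p : ℕ) :
    0 ≤ ∑ i, ∑ j, ((X * Xᵀ) i j) ^ p := by
  have e1 : ∀ i j : Fin n, ((X * Xᵀ) i j) ^ p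
      = ∑ f : Fin p → Fin d, (∏ l, X i (f l)) * (∏ l, X j (f l)) := by
    intro i j
    rw [Matrix.mul_apply]
    simp_rw [Matrix.transpose_apply]
    rw [Fintype.sum_pow]
    exact Finset.sum_congr rfl fun f _ => Finset.prod_mul_distrib
  have key : ∑ i, ∑ j, ((X * Xᵀ) i j) ^ p
      = ∑ f : Fin p → Fin d, (∑ i, ∏ l, X i (f l)) * (∑ j, ∏ l, X j (f l)) := by
    calc ∑ i, ∑ j, ((X * Xᵀ) i j) ^ p
        = ∑ i, ∑ j, ∑ f : Fin p → Fin d, (∏ l, X i (f l)) * (∏ l, X j (f l)) := by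
          exact Finset.sum_congr rfl fun i _ => Finset.sum_congr rfl fun j _ => e1 i j
      _ = ∑ i, ∑ f : Fin p → Fin d, ∑ j, (∏ l, X i (f l)) * (∏ l, X j (f l)) :=
          Finset.sum_congr rfl fun i _ => Finset.sum_comm
      _ = ∑ f : Fin p → Fin d, ∑ i, ∑ j, (∏ l, X i (f l)) * (∏ l, X j (f l)) :=
          Finset.sum_comm
      _ = ∑ f : Fin p → Fin d, (∑ i, ∏ l, X i (f l)) * (∑ j, ∏ l, X j (f l)) := by
          refine Finset.sum_congr rfl fun f _ => ?_
          rw [Finset.sum_mul]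
          exact Finset.sum_congr rfl fun i _ => (Finset.mul_sum _ _ _).symm
  rw [key]
  exact Finset.sum_nonneg fun f _ => mul_self_nonneg _

/-- If `n K = Σ_{i=0}^∞ c_i (X Xᵀ)^{⊙i}` with nonnegative summable coefficients and `c 0 > 0`,
and the rows of `X` have unit norm, then the effective rank of `K` is at most
`(Σ_i c_i) / c 0`. -/
theorem effective_rank_constant_bound
    (n d : ℕ) (hn : 0 < n) (X : Matrix (Fin n) (Fin d) ℝ)
    (hrow : ∀ i, ∑ k, X i k ^ 2 = 1)
    (c : ℕ → ℝ) (hc : ∀ i, 0 ≤ c i) (hc0 : 0 < c 0) (hsum : Summable c)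
    (K : Matrix (Fin n) (Fin n) ℝ)
    (hK : ∀ i j, HasSum (fun p : ℕ => c p * ((X * Xᵀ) i j) ^ p) ((n : ℝ) * K i j)) :
    K.trace / lamMax K ≤ (∑' i, c i) / c 0 := by
  set S : ℝ := ∑' i, c i with hSdef
  have hSnn : 0 ≤ S := tsum_nonneg hc
  have hnR : (0 : ℝ) < (n : ℝ) := by exact_mod_cast hn
  -- diagonal of X Xᵀ is 1
  have hdiagA : ∀ i, (X * Xᵀ) i i = 1 := by
    intro i
    simp_rw [Matrix.mul_apply, Matrix.transpose_apply, ← sq]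
    exact hrow i
  -- each diagonal entry of K is S / n
  have hdiagK : ∀ i, (n : ℝ) * K i i = S := by
    intro i
    have h := hK i i
    rw [hdiagA i] at h
    simp only [one_pow, mul_one] at h
    exact h.unique hsum.hasSum
  -- trace K = S
  have htrace : K.trace = S := by
    have : (n : ℝ) * K.trace = (n : ℝ) * S := by
      rw [Matrix.trace, Finset.mul_sum]
      simp only [Matrix.diag_apply]
      rw [Finset.sum_congr rfl fun i _ => hdiagK i]
      simp [Finset.mul_sum]
    exact mul_left_cancel₀ (ne_of_gt hnR) this
  -- total sum of K entries
  set T : ℝ := ∑ i, ∑ j, K i j with hTdef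
  have hTsum : HasSum (fun p : ℕ => c p * ∑ i, ∑ j, ((X * Xᵀ) i j) ^ p) ((n : ℝ) * T) := by
    have h1 : HasSum (fun p : ℕ => ∑ i, ∑ j, c p * ((X * Xᵀ) i j) ^ p)
        (∑ i, ∑ j, (n : ℝ) * K i j) := by
      refine hasSum_sum fun i _ => hasSum_sum fun j _ => hK i j
    have h2 : (fun p : ℕ => ∑ i, ∑ j, c p * ((X * Xᵀ) i j) ^ p)
        = fun p : ℕ => c p * ∑ i, ∑ j, ((X * Xᵀ) i j) ^ p := by
      funext p
      simp [Finset.mul_sum]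
    have h3 : (∑ i, ∑ j, (n : ℝ) * K i j) = (n : ℝ) * T := by
      simp [hTdef, Finset.mul_sum]
    rw [h2, h3] at h1
    exact h1
  -- n T ≥ c 0 * n^2
  have hT_ge : c 0 * (n : ℝ) ^ 2 ≤ (n : ℝ) * T := by
    have hle := le_hasSum hTsum 0 (fun p _ =>
      mul_nonneg (hc p) (sum_sum_pow_nonneg X p))
    have h0 : c 0 * ∑ i : Fin n, ∑ j : Fin n, ((X * Xᵀ) i j) ^ 0 = c 0 * (n : ℝ) ^ 2 := by
      simp [sq]
    rwa [h0] at hle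
  have hT : c 0 * (n : ℝ) ≤ T := by
    rw [sq] at hT_ge
    nlinarith
  -- lamMax K ≥ c 0
  set Q : Set ℝ :=
    {t | ∃ u : Fin n → ℝ, (∑ i, u i ^ 2) = 1 ∧ t = ∑ i, ∑ j, u i * K i j * u j} with hQdef
  have hbdd : BddAbove Q := by
    refine ⟨∑ i, ∑ j, |K i j|, ?_⟩
    rintro t ⟨u, hu, rfl⟩
    have habs : ∀ i, |u i| ≤ 1 := by
      intro i
      have h1 : u i ^ 2 ≤ 1 := by
        rw [← hu]
        exact Finset.single_le_sum (fun j _ => sq_nonneg (u j)) (Finset.mem_univ i)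
      nlinarith [abs_nonneg (u i), sq_abs (u i)]
    refine Finset.sum_le_sum fun i _ => Finset.sum_le_sum fun j _ => ?_
    have h2 : |u i * K i j * u j| ≤ |K i j| := by
      rw [abs_mul, abs_mul]
      have h3 : |u i| * |K i j| ≤ |K i j| :=
        mul_le_of_le_one_left (abs_nonneg _) (habs i)
      have h4 : |u i| * |K i j| * |u j| ≤ |u i| * |K i j| :=
        mul_le_of_le_one_right (mul_nonneg (abs_nonneg _) (abs_nonneg _)) (habs j)
      linarith
    exact le_trans (le_abs_self _) h2
  have hs : (1 / Real.sqrt n) * (1 / Real.sqrt n) = 1 / (n : ℝ) := by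
    rw [div_mul_div_comm, one_mul, Real.mul_self_sqrt hnR.le]
  have hmem : T / (n : ℝ) ∈ Q := by
    refine ⟨fun _ => 1 / Real.sqrt n, ?_, ?_⟩
    · have hsq : ((1 : ℝ) / Real.sqrt n) ^ 2 = 1 / n := by
        rw [sq, hs]
      rw [Finset.sum_const, Finset.card_univ, Fintype.card_fin, hsq, nsmul_eq_mul]
      field_simp
    · have hterm : ∀ i j : Fin n,
          (1 / Real.sqrt n) * K i j * (1 / Real.sqrt n) = K i j / n := by
        intro i j
        calc (1 / Real.sqrt n) * K i j * (1 / Real.sqrt n)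
            = K i j * ((1 / Real.sqrt n) * (1 / Real.sqrt n)) := by ring
          _ = K i j * (1 / n) := by rw [hs]
          _ = K i j / n := by ring
      rw [hTdef, Finset.sum_div]
      refine Finset.sum_congr rfl fun i _ => ?_
      rw [Finset.sum_div]
      exact Finset.sum_congr rfl fun j _ => (hterm i j).symm
  have hlam : c 0 ≤ lamMax K := by
    have h1 : c 0 ≤ T / (n : ℝ) := by
      rw [le_div_iff₀ hnR]
      linarith
    exact le_trans h1 (le_csSup hbdd hmem)
  rw [htrace]
  exact div_le_div_of_nonneg_left hSnn hc0 hlam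
end

section
/- Let X ∈ ℝ^{n×d} be a nonzero matrix whose rows all have unit Euclidean norm, and let (c_i)_{i≥0} be nonnegative real coefficients with c_1 > 0 and Σ_{i=0}^∞ c_i < ∞. Define K ∈ ℝ^{n×n} by n K = Σ_{i=0}^∞ c_i (X Xᵀ)^{⊙i} and the centered kernel matrix K̃ := K − (c_0/n) 1_{n×n}. Then the effective rank of K̃ is bounded by a constant multiple of the effective rank of the input data Gram matrix: Tr(K̃)/λ_1(K̃) ≤ (Tr(X Xᵀ)/λ_1(X Xᵀ)) · (Σ_{i=1}^∞ c_i)/c_1. -/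
open MeasureTheory Matrix

/-- The Rayleigh-quotient value set is bounded above. -/
lemma rayleigh_bddAbove {n : ℕ} (A : Matrix (Fin n) (Fin n) ℝ) :
    BddAbove {t | ∃ u : Fin n → ℝ, (∑ i, u i ^ 2) = 1 ∧ t = ∑ i, ∑ j, u i * A i j * u j} := by
  refine ⟨∑ i, ∑ j, |A i j|, ?_⟩
  rintro t ⟨u, hu, rfl⟩
  have habs : ∀ i, |u i| ≤ 1 := by
    intro i
    have h1 : u i ^ 2 ≤ 1 := by
      rw [← hu]
      exact Finset.single_le_sum (f := fun i => u i ^ 2) (fun i _ => sq_nonneg _)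
        (Finset.mem_univ i)
    nlinarith [abs_nonneg (u i), sq_abs (u i)]
  calc ∑ i, ∑ j, u i * A i j * u j ≤ ∑ i, ∑ j, |A i j| := by
        refine Finset.sum_le_sum fun i _ => Finset.sum_le_sum fun j _ => ?_
        calc u i * A i j * u j ≤ |u i * A i j * u j| := le_abs_self _
          _ = |u i| * |A i j| * |u j| := by rw [abs_mul, abs_mul]
          _ ≤ 1 * |A i j| * 1 := by
              apply mul_le_mul (mul_le_mul (habs i) le_rfl (abs_nonneg _) zero_le_one)
                (habs j) (abs_nonneg _)
              positivity
          _ = |A i j| := by ring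

lemma rayleigh_le_lamMax {n : ℕ} (A : Matrix (Fin n) (Fin n) ℝ) (u : Fin n → ℝ)
    (hu : (∑ i, u i ^ 2) = 1) : ∑ i, ∑ j, u i * A i j * u j ≤ lamMax A :=
  le_csSup (rayleigh_bddAbove A) ⟨u, hu, rfl⟩

/-- Hadamard powers of a Gram matrix have nonnegative quadratic forms. -/
lemma quad_pow_nonneg {n d : ℕ} (X : Matrix (Fin n) (Fin d) ℝ) (p : ℕ) (u : Fin n → ℝ) :
    0 ≤ ∑ i, ∑ j, u i * ((X * Xᵀ) i j) ^ p * u j := by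
  have hentry : ∀ i j : Fin n, ((X * Xᵀ) i j) ^ p
      = ∑ f : Fin p → Fin d, (∏ l, X i (f l)) * (∏ l, X j (f l)) := by
    intro i j
    have : (X * Xᵀ) i j = ∑ k, X i k * X j k := by
      simp [Matrix.mul_apply, Matrix.transpose_apply]
    rw [this, Fintype.sum_pow]
    exact Finset.sum_congr rfl fun f _ => by rw [← Finset.prod_mul_distrib]
  set a : Fin n → (Fin p → Fin d) → ℝ := fun i f => u i * ∏ l, X i (f l) with ha
  have key : ∑ i, ∑ j, u i * ((X * Xᵀ) i j) ^ p * u j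
      = ∑ f : Fin p → Fin d, (∑ i, a i f) ^ 2 := by
    calc ∑ i, ∑ j, u i * ((X * Xᵀ) i j) ^ p * u j
        = ∑ i, ∑ j, ∑ f : Fin p → Fin d, a i f * a j f := by
          refine Finset.sum_congr rfl fun i _ => Finset.sum_congr rfl fun j _ => ?_
          rw [hentry, Finset.mul_sum, Finset.sum_mul]
          exact Finset.sum_congr rfl fun f _ => by simp [ha]; ring
      _ = ∑ i, ∑ f : Fin p → Fin d, ∑ j, a i f * a j f :=
          Finset.sum_congr rfl fun i _ => Finset.sum_comm
      _ = ∑ f : Fin p → Fin d, ∑ i, ∑ j, a i f * a j f := Finset.sum_comm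
      _ = ∑ f : Fin p → Fin d, (∑ i, a i f) ^ 2 := by
          refine Finset.sum_congr rfl fun f _ => ?_
          rw [sq, Finset.sum_mul]
          exact Finset.sum_congr rfl fun i _ => (Finset.mul_sum _ _ _).symm
  rw [key]
  exact Finset.sum_nonneg fun f _ => sq_nonneg _

lemma scale_quad {n : ℕ} (u : Fin n → ℝ) (a : ℝ) (A : Fin n → Fin n → ℝ) :
    ∑ i, ∑ j, u i * (a * A i j) * u j = a * ∑ i, ∑ j, u i * A i j * u j := by
  rw [Finset.mul_sum]
  refine Finset.sum_congr rfl fun i _ => ?_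
  rw [Finset.mul_sum]
  exact Finset.sum_congr rfl fun j _ => by ring

/-- If `n K = Σ_{i=0}^∞ c_i (X Xᵀ)^{⊙i}` with nonnegative summable coefficients and `c 1 > 0`,
`X ≠ 0` with unit-norm rows, then the effective rank of the centered kernel
`K̃ = K − (c 0 / n) 1_{n×n}` is at most the effective rank of `X Xᵀ` times
`(Σ_{i≥1} c_i) / c 1`. -/
theorem effective_rank_centered_bound
    (n d : ℕ) (hn : 0 < n) (X : Matrix (Fin n) (Fin d) ℝ) (hX : X ≠ 0)
    (hrow : ∀ i, ∑ k, X i k ^ 2 = 1)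
    (c : ℕ → ℝ) (hc : ∀ i, 0 ≤ c i) (hc1 : 0 < c 1) (hsum : Summable c)
    (K : Matrix (Fin n) (Fin n) ℝ)
    (hK : ∀ i j, HasSum (fun p : ℕ => c p * ((X * Xᵀ) i j) ^ p) ((n : ℝ) * K i j))
    (Ktil : Matrix (Fin n) (Fin n) ℝ)
    (hKtil : Ktil = K - (c 0 / n) • Matrix.of (fun _ _ => (1 : ℝ))) :
    Ktil.trace / lamMax Ktil ≤
      ((X * Xᵀ).trace / lamMax (X * Xᵀ)) * ((∑' i : ℕ, c (i + 1)) / c 1) := by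
  set G := X * Xᵀ with hGdef
  have hnR : (0 : ℝ) < n := by exact_mod_cast hn
  have hGdiag : ∀ i, G i i = 1 := by
    intro i
    have : G i i = ∑ k, X i k * X i k := by
      simp [hGdef, Matrix.mul_apply, Matrix.transpose_apply]
    rw [this, ← hrow i]
    exact Finset.sum_congr rfl fun k _ => (sq (X i k)).symm
  have htraceG : G.trace = n := by
    simp [Matrix.trace, Matrix.diag, hGdiag]
  -- sum S of tail coefficients
  set S := ∑' i : ℕ, c (i + 1) with hSdef
  have hsumS : Summable (fun i => c (i + 1)) := by
    exact (summable_nat_add_iff 1).2 hsum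
  have hSsum : HasSum (fun i => c (i + 1)) S := hsumS.hasSum
  have hS0 : 0 ≤ S := tsum_nonneg fun i => hc _
  -- centered kernel partial sums
  have hKt : ∀ i j, HasSum (fun p : ℕ => c (p + 1) * (G i j) ^ (p + 1)) ((n : ℝ) * Ktil i j) := by
    intro i j
    have h0 : (n : ℝ) * Ktil i j = (n : ℝ) * K i j - c 0 := by
      rw [hKtil]
      simp only [Matrix.sub_apply, Matrix.smul_apply, Matrix.of_apply, smul_eq_mul, mul_one]
      field_simp
    have h2 : HasSum (fun p : ℕ => c p * (G i j) ^ p)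
        (((n : ℝ) * K i j - c 0) + ∑ q ∈ Finset.range 1, c q * (G i j) ^ q) := by
      simpa using hK i j
    have h3 := (hasSum_nat_add_iff (f := fun p : ℕ => c p * (G i j) ^ p) 1).mpr h2
    rw [h0]
    exact h3
  -- trace of Ktil equals S
  have hKtdiag : ∀ i, Ktil i i = S / n := by
    intro i
    have h1 : HasSum (fun p : ℕ => c (p + 1)) ((n : ℝ) * Ktil i i) := by
      have := hKt i i
      simpa [hGdiag i] using this
    have := h1.unique hSsum
    field_simp [this]
    linarith [this]
  have htraceKt : Ktil.trace = S := by
    simp only [Matrix.trace, Matrix.diag]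
    rw [Finset.sum_congr rfl fun i _ => hKtdiag i]
    simp [Finset.sum_const]
    field_simp
  -- lamMax G ≥ 1
  have hlamG1 : 1 ≤ lamMax G := by
    obtain ⟨i0⟩ : Nonempty (Fin n) := ⟨⟨0, hn⟩⟩
    set u0 : Fin n → ℝ := fun i => if i = i0 then 1 else 0 with hu0
    have hu : (∑ i, u0 i ^ 2) = 1 := by
      simp [hu0, apply_ite (· ^ 2)]
    have hval : ∑ i, ∑ j, u0 i * G i j * u0 j = 1 := by
      simp [hu0, ite_mul, mul_ite, Finset.sum_ite_eq', hGdiag i0]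
    calc (1:ℝ) = _ := hval.symm
      _ ≤ lamMax G := rayleigh_le_lamMax G _ hu
  -- key inequality: c1 * R_G(u) ≤ n * lamMax Ktil for any unit u
  have hkey : ∀ u : Fin n → ℝ, (∑ i, u i ^ 2) = 1 →
      c 1 * (∑ i, ∑ j, u i * G i j * u j) ≤ n * lamMax Ktil := by
    intro u hu
    have hterm : ∀ i j : Fin n, HasSum (fun p : ℕ => u i * (c (p + 1) * (G i j) ^ (p + 1)) * u j)
        (u i * ((n : ℝ) * Ktil i j) * u j) := fun i j => ((hKt i j).mul_left (u i)).mul_right (u j)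
    have hsum2 : HasSum
        (fun p : ℕ => ∑ i, ∑ j, u i * (c (p + 1) * (G i j) ^ (p + 1)) * u j)
        (∑ i, ∑ j, u i * ((n : ℝ) * Ktil i j) * u j) :=
      hasSum_sum fun i _ => hasSum_sum fun j _ => hterm i j
    have hnonneg : ∀ p : ℕ, p ≠ 0 →
        0 ≤ ∑ i, ∑ j, u i * (c (p + 1) * (G i j) ^ (p + 1)) * u j := by
      intro p _
      rw [scale_quad u (c (p+1)) (fun i j => (G i j) ^ (p + 1))]
      exact mul_nonneg (hc _) (quad_pow_nonneg X (p + 1) u)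
    have h0le : (∑ i, ∑ j, u i * (c 1 * (G i j) ^ 1) * u j)
        ≤ ∑ i, ∑ j, u i * ((n : ℝ) * Ktil i j) * u j := le_hasSum hsum2 0 hnonneg
    have hleft : (∑ i, ∑ j, u i * (c 1 * (G i j) ^ 1) * u j)
        = c 1 * (∑ i, ∑ j, u i * G i j * u j) := by
      rw [scale_quad u (c 1) (fun i j => (G i j) ^ 1)]
      simp
    have hright : (∑ i, ∑ j, u i * ((n : ℝ) * Ktil i j) * u j)
        = (n : ℝ) * ∑ i, ∑ j, u i * Ktil i j * u j :=
      scale_quad u (n : ℝ) (fun i j => Ktil i j)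
    rw [hleft, hright] at h0le
    calc c 1 * (∑ i, ∑ j, u i * G i j * u j)
        ≤ (n : ℝ) * ∑ i, ∑ j, u i * Ktil i j * u j := h0le
      _ ≤ n * lamMax Ktil := by
          exact mul_le_mul_of_nonneg_left (rayleigh_le_lamMax Ktil u hu) hnR.le
  -- c1 * lamMax G ≤ n * lamMax Ktil
  have hmain : c 1 * lamMax G ≤ n * lamMax Ktil := by
    rw [mul_comm, ← le_div_iff₀ hc1]
    apply csSup_le
    · obtain ⟨i0⟩ : Nonempty (Fin n) := ⟨⟨0, hn⟩⟩
      refine ⟨_, fun i => if i = i0 then (1:ℝ) else 0, by simp [apply_ite (· ^ 2)], rfl⟩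
    · rintro t ⟨u, hu, rfl⟩
      rw [le_div_iff₀ hc1, mul_comm]
      exact hkey u hu
  have hlamGpos : 0 < lamMax G := lt_of_lt_of_le one_pos hlamG1
  have hlamKtpos : 0 < lamMax Ktil := by
    have : 0 < c 1 * lamMax G := mul_pos hc1 hlamGpos
    nlinarith
  -- final arithmetic
  rw [htraceKt, htraceG]
  rw [div_mul_div_comm, div_le_div_iff₀ hlamKtpos (mul_pos hlamGpos hc1)]
  have := mul_le_mul_of_nonneg_left hmain hS0
  nlinarith
end

section
/- Let x_1, …, x_n ∈ ℝ^d with not all x_i zero, let Y_1, …, Y_n ∈ ℝ^m, and define K_inner ∈ ℝ^{n×n} by (K_inner)_{ij} = ⟨Y_i, Y_j⟩·⟨x_i, x_j⟩, i.e. K_inner = (Y Yᵀ) ⊙ (X Xᵀ) where X and Y store the x_i and Y_i row-wise. Set α := sup_{‖b‖₂=1} min_{j∈[n]} |⟨Y_j, b⟩| and assume α > 0. Then (min_{i∈[n]} ‖Y_i‖₂² · Tr(X Xᵀ)) / (max_{i∈[n]} ‖Y_i‖₂² · λ_1(X Xᵀ)) ≤ Tr(K_inner)/λ_1(K_inner)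 ≤ (max_{i∈[n]} ‖Y_i‖₂² / α²) · Tr(X Xᵀ)/λ_1(X Xᵀ). -/
open MeasureTheory Matrix

section Helpers

variable {n d m : ℕ}

private lemma gram_identity (w : Fin n → ℝ) (X : Fin n → Fin d → ℝ) :
    ∑ i, ∑ j, w i * (∑ k, X i k * X j k) * w j = ∑ k, (∑ i, w i * X i k) ^ 2 := by
  have h : ∀ i j : Fin n, w i * (∑ k, X i k * X j k) * w j
      = ∑ k, (w i * X i k) * (w j * X j k) := by
    intro i j
    rw [Finset.mul_sum, Finset.sum_mul]
    exact Finset.sum_congr rfl fun k _ => by ring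
  simp_rw [h]
  conv_rhs => simp only [sq, Finset.sum_mul_sum]
  calc ∑ i, ∑ j, ∑ k, (w i * X i k) * (w j * X j k)
      = ∑ i, ∑ k, ∑ j, (w i * X i k) * (w j * X j k) :=
        Finset.sum_congr rfl fun i _ => Finset.sum_comm
    _ = ∑ k, ∑ i, ∑ j, (w i * X i k) * (w j * X j k) := Finset.sum_comm

private lemma key_identity (w : Fin n → ℝ) (Z : Fin n → Fin m → ℝ) (X : Fin n → Fin d → ℝ) :
    ∑ i, ∑ j, w i * ((∑ l, Z i l * Z j l) * (∑ k, X i k * X j k)) * w j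
      = ∑ l, ∑ k, (∑ i, w i * Z i l * X i k) ^ 2 := by
  have h : ∀ i j : Fin n, w i * ((∑ l, Z i l * Z j l) * (∑ k, X i k * X j k)) * w j
      = ∑ l, (w i * Z i l) * (∑ k, X i k * X j k) * (w j * Z j l) := by
    intro i j
    rw [show w i * ((∑ l, Z i l * Z j l) * (∑ k, X i k * X j k)) * w j
        = (∑ l, Z i l * Z j l) * (w i * (∑ k, X i k * X j k) * w j) from by ring,
      Finset.sum_mul]
    exact Finset.sum_congr rfl fun l _ => by ring
  simp_rw [h]
  calc ∑ i, ∑ j, ∑ l, (w i * Z i l) * (∑ k, X i k * X j k) * (w j * Z j l)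
      = ∑ i, ∑ l, ∑ j, (w i * Z i l) * (∑ k, X i k * X j k) * (w j * Z j l) :=
        Finset.sum_congr rfl fun i _ => Finset.sum_comm
    _ = ∑ l, ∑ i, ∑ j, (w i * Z i l) * (∑ k, X i k * X j k) * (w j * Z j l) :=
        Finset.sum_comm
    _ = ∑ l, ∑ k, (∑ i, w i * Z i l * X i k) ^ 2 :=
        Finset.sum_congr rfl fun l _ => by simpa using gram_identity (fun i => w i * Z i l) X

private lemma single_unit (i0 : Fin n) : ∑ i, (Pi.single i0 1 : Fin n → ℝ) i ^ 2 = 1 := by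
  simp [Pi.single_apply, sq]

private lemma quad_single (A : Matrix (Fin n) (Fin n) ℝ) (i0 : Fin n) :
    ∑ i, ∑ j, (Pi.single i0 1 : Fin n → ℝ) i * A i j * (Pi.single i0 1 : Fin n → ℝ) j
      = A i0 i0 := by
  simp [Pi.single_apply, Finset.sum_ite_eq, ite_mul, mul_ite]

private lemma bddAbove_qset (A : Matrix (Fin n) (Fin n) ℝ) :
    BddAbove {t | ∃ u : Fin n → ℝ, (∑ i, u i ^ 2) = 1 ∧ t = ∑ i, ∑ j, u i * A i j * u j} := by
  refine ⟨∑ i, ∑ j, |A i j|, ?_⟩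
  rintro t ⟨u, hu, rfl⟩
  have habs : ∀ i, |u i| ≤ 1 := by
    intro i
    have h1 : u i ^ 2 ≤ 1 := by
      rw [← hu]
      exact Finset.single_le_sum (fun j _ => sq_nonneg (u j)) (Finset.mem_univ i)
    nlinarith [abs_nonneg (u i), sq_abs (u i)]
  refine Finset.sum_le_sum fun i _ => Finset.sum_le_sum fun j _ => ?_
  calc u i * A i j * u j ≤ |u i * A i j * u j| := le_abs_self _
    _ = |u i| * |A i j| * |u j| := by rw [abs_mul, abs_mul]
    _ ≤ |A i j| * |u j| :=
        mul_le_mul_of_nonneg_right (mul_le_of_le_one_left (abs_nonneg _) (habs i)) (abs_nonneg _)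
    _ ≤ |A i j| := mul_le_of_le_one_right (abs_nonneg _) (habs j)

private lemma le_lamMax (A : Matrix (Fin n) (Fin n) ℝ) {u : Fin n → ℝ} (hu : ∑ i, u i ^ 2 = 1) :
    ∑ i, ∑ j, u i * A i j * u j ≤ lamMax A :=
  le_csSup (bddAbove_qset A) ⟨u, hu, rfl⟩

private lemma lamMax_le (hn : 0 < n) (A : Matrix (Fin n) (Fin n) ℝ) {c : ℝ}
    (h : ∀ u : Fin n → ℝ, (∑ i, u i ^ 2) = 1 → ∑ i, ∑ j, u i * A i j * u j ≤ c) :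
    lamMax A ≤ c := by
  refine csSup_le ?_ ?_
  · exact ⟨_, ⟨Pi.single ⟨0, hn⟩ 1, single_unit _, rfl⟩⟩
  · rintro t ⟨u, hu, rfl⟩
    exact h u hu

private lemma rayleigh_bound (A : Matrix (Fin n) (Fin n) ℝ) (w : Fin n → ℝ) :
    ∑ i, ∑ j, w i * A i j * w j ≤ lamMax A * ∑ i, w i ^ 2 := by
  rcases eq_or_ne (∑ i, w i ^ 2) 0 with h | h
  · have hz : ∀ i, w i = 0 := by
      intro i
      have := (Finset.sum_eq_zero_iff_of_nonneg (fun j _ => sq_nonneg (w j))).1 h i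
        (Finset.mem_univ i)
      exact pow_eq_zero_iff (n := 2) (by norm_num) |>.1 this
    simp [hz, h]
  · have hs : 0 < ∑ i, w i ^ 2 :=
      lt_of_le_of_ne (Finset.sum_nonneg fun i _ => sq_nonneg (w i)) (Ne.symm h)
    set s := ∑ i, w i ^ 2 with hsdef
    have hsq : Real.sqrt s ^ 2 = s := Real.sq_sqrt hs.le
    have hsqpos : 0 < Real.sqrt s := Real.sqrt_pos.2 hs
    have hu : ∑ i, (w i / Real.sqrt s) ^ 2 = 1 := by
      simp_rw [div_pow, hsq]
      rw [← Finset.sum_div, ← hsdef, div_self h]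
    have := le_lamMax A hu
    have hq : ∑ i, ∑ j, (w i / Real.sqrt s) * A i j * (w j / Real.sqrt s)
        = (∑ i, ∑ j, w i * A i j * w j) / s := by
      rw [Finset.sum_div]
      refine Finset.sum_congr rfl fun i _ => ?_
      rw [Finset.sum_div]
      refine Finset.sum_congr rfl fun j _ => ?_
      have hss : Real.sqrt s * Real.sqrt s = s := Real.mul_self_sqrt hs.le
      field_simp
      rw [hsq]; ring
    rw [hq, div_le_iff₀ hs] at this
    linarith [this]

end Helpers

set_option maxHeartbeats 1600000 in
/-- Meta theorem bounding the effective rank of the inner-layer NTK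
`K_inner = (Y Yᵀ) ⊙ (X Xᵀ)` above and below in terms of the effective rank of `X Xᵀ`,
where `α = sup_{‖b‖=1} min_j |⟨Y_j, b⟩| > 0`. -/
theorem inner_meta
    (n d m : ℕ) (hn : 0 < n)
    (X : Matrix (Fin n) (Fin d) ℝ) (hX : X ≠ 0)
    (Y : Matrix (Fin n) (Fin m) ℝ)
    (Kin : Matrix (Fin n) (Fin n) ℝ)
    (hKin : Kin = (Y * Yᵀ).hadamard (X * Xᵀ))
    (α : ℝ)
    (hα : α = sSup {t | ∃ b : Fin m → ℝ, (∑ l, b l ^ 2) = 1 ∧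
        t = ⨅ j : Fin n, |∑ l, Y j l * b l|})
    (hαpos : 0 < α) :
    ((⨅ i : Fin n, ∑ l, Y i l ^ 2) * (X * Xᵀ).trace) /
        ((⨆ i : Fin n, ∑ l, Y i l ^ 2) * lamMax (X * Xᵀ)) ≤ Kin.trace / lamMax Kin ∧
    Kin.trace / lamMax Kin ≤
      ((⨆ i : Fin n, ∑ l, Y i l ^ 2) / α ^ 2) * ((X * Xᵀ).trace / lamMax (X * Xᵀ)) := by
  classical
  have hne : Nonempty (Fin n) := ⟨⟨0, hn⟩⟩
  have hKentry : ∀ i j, Kin i j = (∑ l, Y i l * Y j l) * (∑ k, X i k * X j k) := by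
    intro i j
    rw [hKin]
    simp [Matrix.hadamard_apply, Matrix.mul_apply, Matrix.transpose_apply]
  have hGentry : ∀ i j, (X * Xᵀ) i j = ∑ k, X i k * X j k := by
    intro i j
    simp [Matrix.mul_apply, Matrix.transpose_apply]
  set mH := ⨅ i : Fin n, ∑ l, Y i l ^ 2 with hmH
  set MH := ⨆ i : Fin n, ∑ l, Y i l ^ 2 with hMH
  set LG := lamMax (X * Xᵀ) with hLGdef
  set LK := lamMax Kin with hLKdef
  have hTG : (X * Xᵀ).trace = ∑ i, ∑ k, X i k * X i k := by
    simp [Matrix.trace, Matrix.diag, Matrix.mul_apply, Matrix.transpose_apply]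
  have hTK : Kin.trace = ∑ i, (∑ l, Y i l ^ 2) * (∑ k, X i k * X i k) := by
    simp only [Matrix.trace, Matrix.diag]
    refine Finset.sum_congr rfl fun i _ => ?_
    rw [hKentry i i]
    congr 1
    exact Finset.sum_congr rfl fun l _ => (sq (Y i l)).symm
  have hHd0 : ∀ i : Fin n, (0:ℝ) ≤ ∑ l, Y i l ^ 2 :=
    fun i => Finset.sum_nonneg fun l _ => sq_nonneg _
  have hGd0 : ∀ i : Fin n, (0:ℝ) ≤ ∑ k, X i k * X i k :=
    fun i => Finset.sum_nonneg fun k _ => mul_self_nonneg _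
  obtain ⟨i0, k0, hX0⟩ : ∃ i k, X i k ≠ 0 := by
    by_contra hc
    push_neg at hc
    exact hX (by ext i k; simpa using hc i k)
  have hGdi0 : 0 < ∑ k, X i0 k * X i0 k :=
    lt_of_lt_of_le (mul_self_pos.2 hX0)
      (Finset.single_le_sum (fun k _ => mul_self_nonneg (X i0 k)) (Finset.mem_univ k0))
  have hTGpos : 0 < (X * Xᵀ).trace := by
    rw [hTG]
    exact lt_of_lt_of_le hGdi0 (Finset.single_le_sum (fun i _ => hGd0 i) (Finset.mem_univ i0))
  have hLGpos : 0 < LG := by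
    have h1 := le_lamMax (X * Xᵀ) (single_unit i0)
    rw [quad_single, hGentry] at h1
    exact lt_of_lt_of_le hGdi0 h1
  have hLG0 : (0:ℝ) ≤ LG := hLGpos.le
  -- extraction of near-optimal b
  have hSne : Set.Nonempty {t | ∃ b : Fin m → ℝ, (∑ l, b l ^ 2) = 1 ∧
      t = ⨅ j : Fin n, |∑ l, Y j l * b l|} := by
    by_contra hc
    rw [Set.not_nonempty_iff_eq_empty] at hc
    rw [hc, Real.sSup_empty] at hα
    linarith
  have hbext : ∀ γ : ℝ, γ < α → ∃ b : Fin m → ℝ, (∑ l, b l ^ 2) = 1 ∧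
      ∀ j, γ ≤ |∑ l, Y j l * b l| := by
    intro γ hγ
    have hγ' : γ < sSup {t | ∃ b : Fin m → ℝ, (∑ l, b l ^ 2) = 1 ∧
        t = ⨅ j : Fin n, |∑ l, Y j l * b l|} := hα ▸ hγ
    obtain ⟨t, ⟨b, hb, rfl⟩, ht⟩ := exists_lt_of_lt_csSup hSne hγ'
    exact ⟨b, hb, fun j => le_trans ht.le (ciInf_le (Finite.bddBelow_range _) j)⟩
  -- lower bound on the diagonal of Y Yᵀ
  have hHdlow : ∀ i : Fin n, α ^ 2 / 4 ≤ ∑ l, Y i l ^ 2 := by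
    intro i
    obtain ⟨b0, hb0, hb0low⟩ := hbext (α / 2) (by linarith)
    have h1 := hb0low i
    have h2 : (∑ l, Y i l * b0 l) ^ 2 ≤ (∑ l, Y i l ^ 2) * 1 := by
      rw [← hb0]
      exact Finset.sum_mul_sq_le_sq_mul_sq _ _ _
    nlinarith [sq_abs (∑ l, Y i l * b0 l), abs_nonneg (∑ l, Y i l * b0 l)]
  have hmHlow : α ^ 2 / 4 ≤ mH := le_ciInf hHdlow
  have hmHpos : 0 < mH := lt_of_lt_of_le (by positivity) hmHlow
  have hmH_le : ∀ i : Fin n, mH ≤ ∑ l, Y i l ^ 2 :=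
    fun i => ciInf_le (Finite.bddBelow_range _) i
  have hMH_ge : ∀ i : Fin n, (∑ l, Y i l ^ 2) ≤ MH :=
    fun i => le_ciSup (f := fun i : Fin n => ∑ l, Y i l ^ 2) (Finite.bddAbove_range _) i
  have hMHpos : 0 < MH :=
    lt_of_lt_of_le hmHpos (le_trans (hmH_le ⟨0, hn⟩) (hMH_ge ⟨0, hn⟩))
  -- trace bounds
  have hTK1 : mH * (X * Xᵀ).trace ≤ Kin.trace := by
    rw [hTK, hTG, Finset.mul_sum]
    exact Finset.sum_le_sum fun i _ => mul_le_mul_of_nonneg_right (hmH_le i) (hGd0 i)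
  have hTK2 : Kin.trace ≤ MH * (X * Xᵀ).trace := by
    rw [hTK, hTG, Finset.mul_sum]
    exact Finset.sum_le_sum fun i _ => mul_le_mul_of_nonneg_right (hMH_ge i) (hGd0 i)
  have hTKpos : 0 < Kin.trace := lt_of_lt_of_le (by positivity) hTK1
  -- upper bound on lamMax Kin
  have hLK0 : (0:ℝ) ≤ LK := by
    have h1 := le_lamMax Kin (single_unit i0)
    rw [quad_single, hKentry i0 i0] at h1
    have h2 : (0:ℝ) ≤ (∑ l, Y i0 l * Y i0 l) * (∑ k, X i0 k * X i0 k) :=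
      mul_nonneg (Finset.sum_nonneg fun l _ => mul_self_nonneg _) (hGd0 i0)
    linarith
  have hLKup : LK ≤ MH * LG := by
    apply lamMax_le hn
    intro u hu
    have e1 : ∑ i, ∑ j, u i * Kin i j * u j
        = ∑ l, ∑ k, (∑ i, u i * Y i l * X i k) ^ 2 := by
      simp_rw [hKentry]
      exact key_identity u (fun i l => Y i l) X
    have e2 : ∀ l : Fin m, ∑ k, (∑ i, u i * Y i l * X i k) ^ 2
        = ∑ i, ∑ j, (u i * Y i l) * (X * Xᵀ) i j * (u j * Y j l) := by
      intro l
      simp_rw [hGentry]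
      exact (gram_identity (fun i => u i * Y i l) X).symm
    calc ∑ i, ∑ j, u i * Kin i j * u j
        = ∑ l, ∑ i, ∑ j, (u i * Y i l) * (X * Xᵀ) i j * (u j * Y j l) := by
          rw [e1]; exact Finset.sum_congr rfl fun l _ => e2 l
      _ ≤ ∑ l, LG * ∑ i, (u i * Y i l) ^ 2 :=
          Finset.sum_le_sum fun l _ => rayleigh_bound (X * Xᵀ) (fun i => u i * Y i l)
      _ = LG * ∑ i, u i ^ 2 * (∑ l, Y i l ^ 2) := by
          rw [← Finset.mul_sum]
          congr 1
          rw [Finset.sum_comm]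
          refine Finset.sum_congr rfl fun i _ => ?_
          rw [Finset.mul_sum]
          exact Finset.sum_congr rfl fun l _ => by ring
      _ ≤ LG * ∑ i, u i ^ 2 * MH := by
          refine mul_le_mul_of_nonneg_left ?_ hLG0
          exact Finset.sum_le_sum fun i _ => mul_le_mul_of_nonneg_left (hMH_ge i) (sq_nonneg _)
      _ = MH * LG := by
          rw [← Finset.sum_mul, hu]; ring
  -- lower bound on lamMax Kin : α² LG ≤ LK
  have hLKlow : α ^ 2 * LG ≤ LK := by
    apply le_of_forall_pos_le_add
    intro ε hε
    set δ1 := min (α / 2) (ε / (4 * α * LG + 1)) with hδ1def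
    have hδ1pos : 0 < δ1 := lt_min (by linarith) (by positivity)
    have hδ1a : δ1 ≤ α / 2 := min_le_left _ _
    have hδ1b : δ1 * (4 * α * LG + 1) ≤ ε := by
      have h1 : δ1 ≤ ε / (4 * α * LG + 1) := min_le_right _ _
      have h2 : (0:ℝ) < 4 * α * LG + 1 := by positivity
      exact (le_div_iff₀ h2).1 h1
    set δ2 := min (LG / 2) (ε / (2 * α ^ 2 + 1)) with hδ2def
    have hδ2pos : 0 < δ2 := lt_min (by linarith) (by positivity)
    have hδ2a : δ2 ≤ LG / 2 := min_le_left _ _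
    have hδ2b : δ2 * (2 * α ^ 2 + 1) ≤ ε := by
      have h1 : δ2 ≤ ε / (2 * α ^ 2 + 1) := min_le_right _ _
      have h2 : (0:ℝ) < 2 * α ^ 2 + 1 := by positivity
      exact (le_div_iff₀ h2).1 h1
    obtain ⟨b, hb, hblow⟩ := hbext (α - δ1) (by linarith)
    set c : Fin n → ℝ := fun j => ∑ l, Y j l * b l with hcdef
    have hβpos : 0 < α - δ1 := by linarith
    have hc2 : ∀ j, (α - δ1) ^ 2 ≤ c j ^ 2 := by
      intro j
      have h1 := hblow j
      nlinarith [sq_abs (c j), abs_nonneg (c j)]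
    have hcne : ∀ j, c j ≠ 0 := by
      intro j h0
      have h1 := hblow j
      rw [show (∑ l, Y j l * b l) = c j from rfl, h0, abs_zero] at h1
      linarith
    -- near-optimal unit vector for X Xᵀ
    obtain ⟨t, ⟨v, hv, rfl⟩, htv⟩ := exists_lt_of_lt_csSup
      (⟨_, ⟨Pi.single ⟨0, hn⟩ 1, single_unit _, rfl⟩⟩ :
        Set.Nonempty {t | ∃ u : Fin n → ℝ, (∑ i, u i ^ 2) = 1 ∧
          t = ∑ i, ∑ j, u i * (X * Xᵀ) i j * u j})
      (show LG - δ2 < lamMax (X * Xᵀ) by linarith)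
    set u : Fin n → ℝ := fun i => v i / c i with hudef
    set s := ∑ i, u i ^ 2 with hsdef
    have hspos : 0 < s := by
      obtain ⟨i1, hi1⟩ : ∃ i, v i ≠ 0 := by
        by_contra hcon
        push_neg at hcon
        rw [Finset.sum_eq_zero (fun i _ => by rw [hcon i]; ring)] at hv
        exact zero_ne_one hv
      have h1 : 0 < u i1 ^ 2 := by
        have : u i1 ≠ 0 := div_ne_zero hi1 (hcne i1)
        positivity
      exact lt_of_lt_of_le h1
        (Finset.single_le_sum (fun i _ => sq_nonneg (u i)) (Finset.mem_univ i1))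
    have hsle : s ≤ 1 / (α - δ1) ^ 2 := by
      have h1 : ∀ i, u i ^ 2 ≤ v i ^ 2 / (α - δ1) ^ 2 := by
        intro i
        have e : u i ^ 2 = v i ^ 2 / c i ^ 2 := div_pow _ _ _
        rw [e]
        exact div_le_div_of_nonneg_left (sq_nonneg _) (by positivity) (hc2 i)
      calc s ≤ ∑ i, v i ^ 2 / (α - δ1) ^ 2 := Finset.sum_le_sum fun i _ => h1 i
        _ = 1 / (α - δ1) ^ 2 := by rw [← Finset.sum_div, hv]
    -- quadratic form comparison
    have hexp : ∀ i j : Fin n, (∑ l, Y i l * Y j l)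
        = (∑ l, (Y i l - c i * b l) * (Y j l - c j * b l)) + c i * c j := by
      intro i j
      have h1 : ∀ l, (Y i l - c i * b l) * (Y j l - c j * b l)
          = Y i l * Y j l - c i * (Y j l * b l) - c j * (Y i l * b l)
            + (c i * c j) * b l ^ 2 := fun l => by ring
      simp_rw [h1]
      rw [Finset.sum_add_distrib, Finset.sum_sub_distrib, Finset.sum_sub_distrib,
        ← Finset.mul_sum, ← Finset.mul_sum, ← Finset.mul_sum, hb]
      have h2 : ∑ l, Y j l * b l = c j := rfl
      have h3 : ∑ l, Y i l * b l = c i := rfl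
      rw [h2, h3]; ring
    have hquadsplit : ∑ i, ∑ j, u i * Kin i j * u j
        = (∑ i, ∑ j, u i * ((∑ l, (Y i l - c i * b l) * (Y j l - c j * b l))
            * (∑ k, X i k * X j k)) * u j)
          + ∑ i, ∑ j, u i * ((c i * c j) * (∑ k, X i k * X j k)) * u j := by
      rw [← Finset.sum_add_distrib]
      refine Finset.sum_congr rfl fun i _ => ?_
      rw [← Finset.sum_add_distrib]
      refine Finset.sum_congr rfl fun j _ => ?_
      rw [hKentry i j, hexp i j]; ring
    have hfirst : (0:ℝ) ≤ ∑ i, ∑ j, u i * ((∑ l, (Y i l - c i * b l) * (Y j l - c j * b l))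
        * (∑ k, X i k * X j k)) * u j := by
      rw [key_identity u (fun i l => Y i l - c i * b l) X]
      positivity
    have hsecond : ∑ i, ∑ j, u i * ((c i * c j) * (∑ k, X i k * X j k)) * u j
        = ∑ i, ∑ j, v i * (X * Xᵀ) i j * v j := by
      refine Finset.sum_congr rfl fun i _ => Finset.sum_congr rfl fun j _ => ?_
      rw [hGentry i j]
      have hui : u i * c i = v i := div_mul_cancel₀ (v i) (hcne i)
      have huj : u j * c j = v j := div_mul_cancel₀ (v j) (hcne j)
      calc u i * ((c i * c j) * (∑ k, X i k * X j k)) * u j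
          = (u i * c i) * (∑ k, X i k * X j k) * (u j * c j) := by ring
        _ = v i * (∑ k, X i k * X j k) * v j := by rw [hui, huj]
    have hchain : ∑ i, ∑ j, v i * (X * Xᵀ) i j * v j ≤ LK * s := by
      have h1 : ∑ i, ∑ j, v i * (X * Xᵀ) i j * v j ≤ ∑ i, ∑ j, u i * Kin i j * u j := by
        rw [hquadsplit, hsecond]
        linarith
      exact le_trans h1 (rayleigh_bound Kin u)
    have hfin : (α - δ1) ^ 2 * (LG - δ2) ≤ LK := by
      have h2 : LG - δ2 ≤ LK * (1 / (α - δ1) ^ 2) := by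
        have h3 : LK * s ≤ LK * (1 / (α - δ1) ^ 2) :=
          mul_le_mul_of_nonneg_left hsle hLK0
        linarith
      have h4 := mul_le_mul_of_nonneg_right h2 (sq_nonneg (α - δ1))
      have h5 : LK * (1 / (α - δ1) ^ 2) * (α - δ1) ^ 2 = LK := by
        field_simp
      rw [h5] at h4
      linarith [h4]
    -- arithmetic wrap-up
    have key1 : α ^ 2 * LG - 2 * α * δ1 * LG - α ^ 2 * δ2 ≤ (α - δ1) ^ 2 * (LG - δ2) := by
      nlinarith [sq_nonneg δ1, mul_nonneg (mul_nonneg hαpos.le hδ1pos.le) hδ2pos.le,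
        mul_nonneg (mul_nonneg hδ1pos.le hδ1pos.le) (by linarith : (0:ℝ) ≤ LG - δ2)]
    have e1 : 2 * α * δ1 * LG ≤ ε / 2 := by nlinarith [hδ1pos.le]
    have e2 : α ^ 2 * δ2 ≤ ε / 2 := by nlinarith [hδ2pos.le]
    linarith
  have hLKpos : 0 < LK := lt_of_lt_of_le (by positivity) hLKlow
  constructor
  · rw [div_le_div_iff₀ (by positivity) hLKpos]
    nlinarith [mul_le_mul_of_nonneg_right hTK1 hLK0,
      mul_le_mul_of_nonneg_left hLKup hTKpos.le]
  · rw [div_mul_div_comm, div_le_div_iff₀ hLKpos (by positivity)]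
    nlinarith [mul_le_mul_of_nonneg_left hLKlow hTKpos.le,
      mul_le_mul_of_nonneg_right hTK2 hLK0]
end

section
/- Let x_1, …, x_n ∈ ℝ^d, w_1, …, w_m ∈ ℝ^d, a ∈ ℝ^m, and for each i ∈ [n] define Y_i ∈ ℝ^m by (Y_i)_ℓ = a_ℓ · 1{⟨w_ℓ, x_i⟩ ≥ 0} (the inner-layer gradient vectors of a two-layer ReLU network). Let R_min, R_max > 0, let τ = {ℓ ∈ [m] : |a_ℓ| ∈ [R_min, R_max]} with τ nonempty, and set T = min_{i∈[n]} Σ_{ℓ∈τ} 1{⟨x_i, w_ℓ⟩ ≥ 0}. Then α := sup_{‖b‖₂=1} min_{i∈[n]} |⟨Y_i, b⟩| ≥ (R_min²/R_max) · T/|τ|^{1/2}. -/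
open Matrix

/-- Lower bound on `α = sup_{‖b‖=1} min_i |⟨Y_i, b⟩|` for the inner-layer gradient vectors
`(Y_i)_ℓ = a_ℓ 1{⟨w_ℓ, x_i⟩ ≥ 0}` of a two-layer ReLU network, in terms of the set `τ` of
neurons whose outer weights have magnitude in `[R_min, R_max]` and the minimal number `T`
of active neurons in `τ`. -/
theorem alpha_lower_bound
    (n d m : ℕ) (hn : 0 < n)
    (x : Fin n → Fin d → ℝ) (w : Fin m → Fin d → ℝ) (a : Fin m → ℝ)
    (Y : Fin n → Fin m → ℝ)
    (hY : ∀ i l, Y i l = a l * (if 0 ≤ ∑ k, w l k * x i k then (1 : ℝ) else 0))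
    (Rmin Rmax : ℝ) (hRmin : 0 < Rmin) (hRmax : 0 < Rmax)
    (τ : Finset (Fin m))
    (hτ : ∀ l, l ∈ τ ↔ Rmin ≤ |a l| ∧ |a l| ≤ Rmax)
    (hτne : τ.Nonempty)
    (T : ℕ)
    (hT : T = ⨅ i : Fin n, ∑ l ∈ τ, (if 0 ≤ ∑ k, x i k * w l k then (1 : ℕ) else 0))
    (α : ℝ)
    (hα : α = sSup {t | ∃ b : Fin m → ℝ, (∑ l, b l ^ 2) = 1 ∧
        t = ⨅ j : Fin n, |∑ l, Y j l * b l|}) :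
    Rmin ^ 2 / Rmax * (T : ℝ) / Real.sqrt (τ.card) ≤ α := by
  classical
  set i0 : Fin n := ⟨0, hn⟩
  set N : ℝ := Real.sqrt (∑ l ∈ τ, a l ^ 2) with hNdef
  have hRminsq : ∀ l ∈ τ, Rmin ^ 2 ≤ a l ^ 2 := by
    intro l hl
    have h := (hτ l).1 hl
    calc Rmin ^ 2 ≤ |a l| ^ 2 := pow_le_pow_left₀ hRmin.le h.1 2
      _ = a l ^ 2 := sq_abs _
  have hsumpos : 0 < ∑ l ∈ τ, a l ^ 2 := by
    obtain ⟨l0, hl0⟩ := hτne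
    have h0 : 0 < a l0 ^ 2 := lt_of_lt_of_le (by positivity) (hRminsq l0 hl0)
    exact Finset.sum_pos' (fun l _ => sq_nonneg _) ⟨l0, hl0, h0⟩
  have hNpos : 0 < N := Real.sqrt_pos.mpr hsumpos
  have hNsq : N ^ 2 = ∑ l ∈ τ, a l ^ 2 := Real.sq_sqrt hsumpos.le
  set b : Fin m → ℝ := fun l => if l ∈ τ then a l / N else 0 with hbdef
  have hbnorm : (∑ l, b l ^ 2) = 1 := by
    have h1 : ∑ l, b l ^ 2 = ∑ l ∈ τ, a l ^ 2 / N ^ 2 := by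
      rw [← Finset.sum_subset (Finset.subset_univ τ)]
      · exact Finset.sum_congr rfl (fun l hl => by simp [hbdef, hl, div_pow])
      · intro l _ hl; simp [hbdef, hl]
    rw [h1, ← Finset.sum_div, ← hNsq, div_self (by positivity)]
  -- the count of active neurons for sample j
  set cnt : Fin n → ℕ := fun j => ∑ l ∈ τ, (if 0 ≤ ∑ k, x j k * w l k then (1 : ℕ) else 0)
    with hcnt
  set g : Fin n → ℝ := fun j => ∑ l ∈ τ, a l ^ 2 *
    (if 0 ≤ ∑ k, w l k * x j k then (1 : ℝ) else 0) with hgdef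
  have hinner : ∀ j, (∑ l, Y j l * b l) = g j / N := by
    intro j
    rw [hgdef]
    rw [← Finset.sum_subset (Finset.subset_univ τ) (by intro l _ hl; simp [hbdef, hl])]
    rw [Finset.sum_div]
    refine Finset.sum_congr rfl (fun l hl => ?_)
    simp only [hY, hbdef, hl, if_true]
    ring
  have hcond : ∀ j l, (0 ≤ ∑ k, x j k * w l k) ↔ (0 ≤ ∑ k, w l k * x j k) := by
    intro j l
    constructor <;> intro h <;> simpa [mul_comm] using h
  have hglb : ∀ j, Rmin ^ 2 * (cnt j : ℝ) ≤ g j := by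
    intro j
    rw [hcnt, hgdef]
    push_cast
    rw [Finset.mul_sum]
    refine Finset.sum_le_sum (fun l hl => ?_)
    by_cases h : 0 ≤ ∑ k, w l k * x j k
    · simp only [h, if_true, (hcond j l).mpr h, mul_one]
      exact hRminsq l hl
    · have h' : ¬ 0 ≤ ∑ k, x j k * w l k := fun hc => h ((hcond j l).mp hc)
      simp [h, h']
  have hne : Nonempty (Fin n) := ⟨i0⟩
  have hTle : ∀ j, (T : ℝ) ≤ (cnt j : ℝ) := by
    intro j
    have : T ≤ cnt j := by
      rw [hT]
      exact ciInf_le (OrderBot.bddBelow _) j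
    exact_mod_cast this
  have hNle : N ≤ Rmax * Real.sqrt (τ.card) := by
    have h1 : ∑ l ∈ τ, a l ^ 2 ≤ (τ.card : ℝ) * Rmax ^ 2 := by
      calc ∑ l ∈ τ, a l ^ 2 ≤ ∑ l ∈ τ, Rmax ^ 2 := by
            refine Finset.sum_le_sum (fun l hl => ?_)
            have h := (hτ l).1 hl
            calc a l ^ 2 = |a l| ^ 2 := (sq_abs _).symm
              _ ≤ Rmax ^ 2 := pow_le_pow_left₀ (abs_nonneg _) h.2 2
        _ = (τ.card : ℝ) * Rmax ^ 2 := by rw [Finset.sum_const, nsmul_eq_mul]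
    calc N ≤ Real.sqrt ((τ.card : ℝ) * Rmax ^ 2) := Real.sqrt_le_sqrt h1
      _ = Rmax * Real.sqrt (τ.card) := by
          rw [Real.sqrt_mul (Nat.cast_nonneg _), Real.sqrt_sq hRmax.le, mul_comm]
  have hτcardpos : (0 : ℝ) < Real.sqrt (τ.card) := by
    have : (0 : ℝ) < (τ.card : ℝ) := by
      exact_mod_cast Finset.card_pos.mpr hτne
    exact Real.sqrt_pos.mpr this
  have hkey : ∀ j, Rmin ^ 2 / Rmax * (T : ℝ) / Real.sqrt (τ.card) ≤ |∑ l, Y j l * b l| := by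
    intro j
    have hg0 : 0 ≤ g j := by
      rw [hgdef]
      exact Finset.sum_nonneg (fun l _ => by positivity)
    have h1 : Rmin ^ 2 * (T : ℝ) ≤ g j :=
      le_trans (mul_le_mul_of_nonneg_left (hTle j) (by positivity)) (hglb j)
    have h2 : Rmin ^ 2 * (T : ℝ) / (Rmax * Real.sqrt (τ.card)) ≤ g j / N :=
      div_le_div₀ hg0 h1 hNpos hNle
    have heq : Rmin ^ 2 / Rmax * (T : ℝ) / Real.sqrt (τ.card)
        = Rmin ^ 2 * (T : ℝ) / (Rmax * Real.sqrt (τ.card)) := by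
      field_simp
    rw [heq, hinner j, abs_of_nonneg (by positivity : (0:ℝ) ≤ g j / N)]
    exact h2
  -- membership in the set
  set t0 : ℝ := ⨅ j : Fin n, |∑ l, Y j l * b l| with ht0
  have hmem : t0 ∈ {t | ∃ b : Fin m → ℝ, (∑ l, b l ^ 2) = 1 ∧
      t = ⨅ j : Fin n, |∑ l, Y j l * b l|} := ⟨b, hbnorm, rfl⟩
  have hlb : Rmin ^ 2 / Rmax * (T : ℝ) / Real.sqrt (τ.card) ≤ t0 :=
    le_ciInf hkey
  -- bounded above
  have hbdd : BddAbove {t | ∃ b : Fin m → ℝ, (∑ l, b l ^ 2) = 1 ∧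
      t = ⨅ j : Fin n, |∑ l, Y j l * b l|} := by
    refine ⟨Real.sqrt (∑ l, (Y i0 l) ^ 2), ?_⟩
    rintro t ⟨c, hc1, rfl⟩
    have h1 : (⨅ j : Fin n, |∑ l, Y j l * c l|) ≤ |∑ l, Y i0 l * c l| :=
      ciInf_le (Set.Finite.bddBelow (Set.finite_range _)) i0
    refine le_trans h1 ?_
    have hcs : (∑ l, Y i0 l * c l) ^ 2 ≤ (∑ l, (Y i0 l) ^ 2) * (∑ l, c l ^ 2) :=
      Finset.sum_mul_sq_le_sq_mul_sq Finset.univ _ _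
    calc |∑ l, Y i0 l * c l| = Real.sqrt ((∑ l, Y i0 l * c l) ^ 2) :=
          (Real.sqrt_sq_eq_abs _).symm
      _ ≤ Real.sqrt ((∑ l, (Y i0 l) ^ 2) * (∑ l, c l ^ 2)) := Real.sqrt_le_sqrt hcs
      _ = Real.sqrt (∑ l, (Y i0 l) ^ 2) := by rw [hc1, mul_one]
  rw [hα]
  exact le_trans hlb (le_csSup hbdd hmem)
end

section
/- Let d ≥ 2 and let x_1, …, x_n ∈ ℝ^d be nonzero with the matrix X (rows x_i) nonzero. Let φ(z) = max(0, z) be the ReLU. Suppose |a_ℓ| = R > 0 for all ℓ ∈ [m], and w_1, …, w_m are independent random vectors in ℝ^d such that w_ℓ/‖w_ℓ‖ is uniformly distributed on the unit sphere. Fix δ, ε ∈ (0,1) and assume m ≥ 4 log(n/ε)/δ². Let K_inner = (Y Yᵀ) ⊙ (X Xᵀ) where Y_i = (a_ℓ 1{⟨w_ℓ, x_i⟩ ≥ 0})_{ℓ∈[m]}. Then with probability at least 1 − ε: ((1−δ)²/4) · eff(X Xᵀ) ≤ eff(K_inner) ≤ (4/(1−δ)²) · eff(X Xᵀ). -/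
open MeasureTheory ProbabilityTheory Matrix
open scoped ENNReal

/-- The standard Gaussian measure `N(0, I_d)` on `ℝ^d`. -/
noncomputable def stdGaussPi (d : ℕ) : Measure (Fin d → ℝ) :=
  Measure.pi fun _ => gaussianReal 0 1

/-- Normalization of a vector in `ℝ^d` to the unit sphere (Euclidean norm). -/
noncomputable def sphNormalize (d : ℕ) (v : Fin d → ℝ) : Fin d → ℝ :=
  (Real.sqrt (∑ k, v k ^ 2))⁻¹ • v

/-- The uniform probability distribution on the unit sphere `S^{d−1}`, realized as the
law of `g/‖g‖` for a standard Gaussian vector `g`. -/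
noncomputable def uniformSphere (d : ℕ) : Measure (Fin d → ℝ) :=
  Measure.map (sphNormalize d) (stdGaussPi d)

namespace EffRank


variable {n : ℕ}

def qf (A : Matrix (Fin n) (Fin n) ℝ) (u : Fin n → ℝ) : ℝ :=
  ∑ i, ∑ j, u i * A i j * u j

def SS (A : Matrix (Fin n) (Fin n) ℝ) : Set ℝ :=
  {t | ∃ u : Fin n → ℝ, (∑ i, u i ^ 2) = 1 ∧ t = qf A u}

lemma lamMax_eq_sSup (A : Matrix (Fin n) (Fin n) ℝ) : lamMax A = sSup (SS A) := rfl

lemma bddAbove_SS (A : Matrix (Fin n) (Fin n) ℝ) : BddAbove (SS A) := by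
  refine ⟨∑ i, ∑ j, |A i j|, ?_⟩
  rintro t ⟨u, hu, rfl⟩
  have hub : ∀ i, |u i| ≤ 1 := by
    intro i
    have h1 : u i ^ 2 ≤ 1 := by
      rw [← hu]
      exact Finset.single_le_sum (fun j _ => sq_nonneg (u j)) (Finset.mem_univ i)
    nlinarith [abs_nonneg (u i), sq_abs (u i)]
  calc qf A u ≤ |qf A u| := le_abs_self _
    _ ≤ ∑ i, |∑ j, u i * A i j * u j| := Finset.abs_sum_le_sum_abs _ _
    _ ≤ ∑ i, ∑ j, |u i * A i j * u j| :=
        Finset.sum_le_sum fun i _ => Finset.abs_sum_le_sum_abs _ _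
    _ ≤ ∑ i, ∑ j, |A i j| := by
        refine Finset.sum_le_sum fun i _ => Finset.sum_le_sum fun j _ => ?_
        rw [abs_mul, abs_mul]
        calc |u i| * |A i j| * |u j| ≤ 1 * |A i j| * 1 := by
              apply mul_le_mul (mul_le_mul (hub i) le_rfl (abs_nonneg _) (by norm_num))
                (hub j) (abs_nonneg _) (by positivity)
          _ = |A i j| := by ring

lemma nonempty_SS (hn : 0 < n) (A : Matrix (Fin n) (Fin n) ℝ) : (SS A).Nonempty := by
  refine ⟨qf A (Pi.single ⟨0, hn⟩ 1), Pi.single ⟨0, hn⟩ 1, ?_, rfl⟩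
  rw [Finset.sum_eq_single ⟨0, hn⟩]
  · simp
  · intro j _ hj; rw [Pi.single_eq_of_ne hj]; ring
  · simp

lemma qf_le_lamMax (A : Matrix (Fin n) (Fin n) ℝ) {u : Fin n → ℝ}
    (hu : (∑ i, u i ^ 2) = 1) : qf A u ≤ lamMax A :=
  le_csSup (bddAbove_SS A) ⟨u, hu, rfl⟩

lemma qf_smul (A : Matrix (Fin n) (Fin n) ℝ) (c : ℝ) (u : Fin n → ℝ) :
    qf A (c • u) = c ^ 2 * qf A u := by
  simp only [qf, Pi.smul_apply, smul_eq_mul, Finset.mul_sum]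
  exact Finset.sum_congr rfl fun i _ => Finset.sum_congr rfl fun j _ => by ring

/-- Rayleigh bound for arbitrary vectors. -/
lemma qf_le (A : Matrix (Fin n) (Fin n) ℝ) (u : Fin n → ℝ) :
    qf A u ≤ lamMax A * ∑ i, u i ^ 2 := by
  rcases eq_or_lt_of_le (Finset.sum_nonneg fun i _ => sq_nonneg (u i)) with h | h
  · have hu : ∀ i, u i = 0 := by
      intro i
      have := (Finset.sum_eq_zero_iff_of_nonneg (fun j _ => sq_nonneg (u j))).1 h.symm i
        (Finset.mem_univ i)
      exact pow_eq_zero_iff (n := 2) (by norm_num) |>.1 this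
    have : qf A u = 0 := by
      simp only [qf]
      refine Finset.sum_eq_zero fun i _ => Finset.sum_eq_zero fun j _ => by rw [hu i]; ring
    rw [this, ← h, mul_zero]
  · set s := ∑ i, u i ^ 2 with hs
    have hsqrt : Real.sqrt s > 0 := Real.sqrt_pos.2 h
    have hnorm : (∑ i, ((Real.sqrt s)⁻¹ • u) i ^ 2) = 1 := by
      simp only [Pi.smul_apply, smul_eq_mul, mul_pow, ← Finset.mul_sum]
      rw [← hs, inv_pow, Real.sq_sqrt h.le]
      field_simp
    have h1 := qf_le_lamMax A hnorm
    rw [qf_smul] at h1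
    have h2 : (Real.sqrt s)⁻¹ ^ 2 = s⁻¹ := by
      rw [inv_pow, Real.sq_sqrt h.le]
    rw [h2] at h1
    calc qf A u = s * (s⁻¹ * qf A u) := by field_simp
      _ ≤ s * lamMax A := mul_le_mul_of_nonneg_left h1 h.le
      _ = lamMax A * s := mul_comm _ _

/-- There is a maximizer of the Rayleigh quotient on the unit sphere. -/
lemma exists_max (hn : 0 < n) (A : Matrix (Fin n) (Fin n) ℝ) :
    ∃ v : Fin n → ℝ, (∑ i, v i ^ 2) = 1 ∧ qf A v = lamMax A := by
  have hcont : Continuous (qf A) := by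
    apply continuous_finset_sum; intro i _
    apply continuous_finset_sum; intro j _
    exact ((continuous_apply i).mul continuous_const).mul (continuous_apply j)
  set Sph : Set (Fin n → ℝ) := {u | (∑ i, u i ^ 2) = 1} with hSph
  have hclosed : IsClosed Sph := by
    have : Continuous fun u : Fin n → ℝ => ∑ i, u i ^ 2 := by
      apply continuous_finset_sum; intro i _; exact (continuous_apply i).pow 2
    exact isClosed_eq this continuous_const
  have hbd : Bornology.IsBounded Sph := by
    apply (Metric.isBounded_closedBall (x := (0 : Fin n → ℝ)) (r := 1)).subset
    intro u hu
    simp only [Metric.mem_closedBall, dist_zero_right]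
    rw [pi_norm_le_iff_of_nonneg (by norm_num)]
    intro i
    have h1 : u i ^ 2 ≤ 1 := by
      rw [← hu]
      exact Finset.single_le_sum (fun j _ => sq_nonneg (u j)) (Finset.mem_univ i)
    rw [Real.norm_eq_abs]
    nlinarith [abs_nonneg (u i), sq_abs (u i)]
  have hcompact : IsCompact Sph := Metric.isCompact_of_isClosed_isBounded hclosed hbd
  have hne : Sph.Nonempty := by
    refine ⟨Pi.single ⟨0, hn⟩ 1, ?_⟩
    show (∑ i, (Pi.single ⟨0, hn⟩ 1 : Fin n → ℝ) i ^ 2) = 1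
    rw [Finset.sum_eq_single ⟨0, hn⟩]
    · simp
    · intro j _ hj; rw [Pi.single_eq_of_ne hj]; ring
    · simp
  obtain ⟨v, hvS, hvmax⟩ := hcompact.exists_isMaxOn hne hcont.continuousOn
  refine ⟨v, hvS, ?_⟩
  have : IsGreatest (SS A) (qf A v) := by
    constructor
    · exact ⟨v, hvS, rfl⟩
    · rintro t ⟨u, hu, rfl⟩
      exact hvmax hu
  rw [lamMax_eq_sSup]
  exact (this.csSup_eq).symm


def bil (A : Matrix (Fin n) (Fin n) ℝ) (u w : Fin n → ℝ) : ℝ :=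
  ∑ i, ∑ j, u i * A i j * w j

lemma qf_expand (A : Matrix (Fin n) (Fin n) ℝ) (hsym : ∀ i j, A i j = A j i)
    (u w : Fin n → ℝ) (t : ℝ) :
    qf A (t • u + w) = qf A u * t ^ 2 + (2 * bil A u w) * t + qf A w := by
  have hb : bil A w u = bil A u w := by
    rw [bil, Finset.sum_comm, bil]
    refine Finset.sum_congr rfl fun i _ => Finset.sum_congr rfl fun j _ => ?_
    rw [hsym j i]; ring
  have : ∀ i j, (t • u + w) i * A i j * (t • u + w) j =
      (u i * A i j * u j) * t ^ 2 + t * (u i * A i j * w j) + t * (w i * A i j * u j)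
        + w i * A i j * w j := by
    intro i j
    simp only [Pi.add_apply, Pi.smul_apply, smul_eq_mul]
    ring
  simp only [qf, this, Finset.sum_add_distrib, ← Finset.sum_mul, ← Finset.mul_sum]
  have e1 : (∑ i, ∑ j, u i * A i j * w j) = bil A u w := rfl
  have e2 : (∑ i, ∑ j, w i * A i j * u j) = bil A u w := hb
  rw [e1, e2]; ring

lemma bil_sq_le (A : Matrix (Fin n) (Fin n) ℝ) (hsym : ∀ i j, A i j = A j i)
    (hpsd : ∀ u, 0 ≤ qf A u) (u w : Fin n → ℝ) :
    (bil A u w) ^ 2 ≤ qf A u * qf A w := by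
  have h := discrim_le_zero (a := qf A u) (b := 2 * bil A u w) (c := qf A w) ?_
  · rw [discrim] at h; nlinarith [h]
  · intro t
    have h2 := hpsd (t • u + w)
    rw [qf_expand A hsym u w t] at h2
    nlinarith [h2]

lemma eigen_max (hn : 0 < n) (A : Matrix (Fin n) (Fin n) ℝ)
    (hsym : ∀ i j, A i j = A j i) {v : Fin n → ℝ}
    (hv1 : (∑ i, v i ^ 2) = 1) (hvmax : qf A v = lamMax A) :
    ∀ j, ∑ i, v i * A i j = lamMax A * v j := by
  set L := lamMax A with hL
  set C : Matrix (Fin n) (Fin n) ℝ := L • (1 : Matrix (Fin n) (Fin n) ℝ) - A with hC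
  have hCapply : ∀ i j, C i j = (if i = j then L else 0) - A i j := by
    intro i j
    simp [hC, Matrix.sub_apply, Matrix.smul_apply, Matrix.one_apply, mul_ite, mul_one, mul_zero]
  have hCsym : ∀ i j, C i j = C j i := by
    intro i j; rw [hCapply, hCapply, hsym i j]
    rcases eq_or_ne i j with h | h
    · subst h; rfl
    · rw [if_neg h, if_neg h.symm]
  have hCqf : ∀ u, qf C u = L * (∑ i, u i ^ 2) - qf A u := by
    intro u
    have : ∀ i j, u i * C i j * u j =
        (if i = j then L * (u i * u j) else 0) - u i * A i j * u j := by
      intro i j; rw [hCapply]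
      by_cases h : i = j <;> simp [h] <;> ring
    simp only [qf, this, Finset.sum_sub_distrib, Finset.sum_ite_eq, Finset.mem_univ, if_true,
      ← Finset.mul_sum]
    congr 1
    congr 1
    exact Finset.sum_congr rfl fun i _ => by ring
  have hCpsd : ∀ u, 0 ≤ qf C u := by
    intro u
    rw [hCqf]
    have := qf_le A u
    linarith
  have hCv : qf C v = 0 := by rw [hCqf, hv1, mul_one, hvmax, sub_self]
  have hbil0 : ∀ w, bil C v w = 0 := by
    intro w
    have h := bil_sq_le C hCsym hCpsd v w
    rw [hCv, zero_mul] at h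
    nlinarith [sq_nonneg (bil C v w)]
  have hrow : ∀ j, ∑ i, v i * C i j = 0 := by
    set r : Fin n → ℝ := fun j => ∑ i, v i * C i j with hr
    have h := hbil0 r
    have hexp : bil C v r = ∑ j, r j ^ 2 := by
      rw [bil, Finset.sum_comm]
      refine Finset.sum_congr rfl fun j _ => ?_
      rw [sq, hr, ← Finset.sum_mul]
    rw [hexp] at h
    intro j
    have := (Finset.sum_eq_zero_iff_of_nonneg (fun i _ => sq_nonneg (r i))).1 h j
      (Finset.mem_univ j)
    have := pow_eq_zero_iff (n := 2) (by norm_num) |>.1 this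
    simpa [hr] using this
  intro j
  have h := hrow j
  simp only [hCapply] at h
  have h' : (∑ i, (v i * (if i = j then L else 0) - v i * A i j)) = 0 := by
    calc (∑ i, (v i * (if i = j then L else 0) - v i * A i j))
        = ∑ x, v x * ((if x = j then L else 0) - A x j) :=
          Finset.sum_congr rfl fun i _ => by ring
      _ = 0 := h
  rw [Finset.sum_sub_distrib] at h'
  have h1 : (∑ i, v i * (if i = j then L else 0)) = L * v j := by
    simp [mul_ite, mul_zero, Finset.sum_ite_eq', mul_comm]
  rw [h1] at h'
  linarith


lemma vvt_le (A : Matrix (Fin n) (Fin n) ℝ) (hsym : ∀ i j, A i j = A j i)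
    (hpsd : ∀ u, 0 ≤ qf A u) (hL : 0 < lamMax A) {v : Fin n → ℝ}
    (hv1 : (∑ i, v i ^ 2) = 1) (hvmax : qf A v = lamMax A)
    (heig : ∀ j, ∑ i, v i * A i j = lamMax A * v j) (w : Fin n → ℝ) :
    lamMax A * (∑ i, v i * w i) ^ 2 ≤ qf A w := by
  set L := lamMax A with hLdef
  have hbil : bil A v w = L * ∑ i, v i * w i := by
    rw [bil, Finset.sum_comm]
    calc (∑ j, ∑ i, v i * A i j * w j) = ∑ j, (∑ i, v i * A i j) * w j := by
          refine Finset.sum_congr rfl fun j _ => ?_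
          rw [Finset.sum_mul]
      _ = ∑ j, L * v j * w j := Finset.sum_congr rfl fun j _ => by rw [heig j]
      _ = L * ∑ i, v i * w i := by rw [Finset.mul_sum]; exact Finset.sum_congr rfl fun i _ => by ring
  have hcs := bil_sq_le A hsym hpsd v w
  rw [hbil, hvmax] at hcs
  have h2 : L ^ 2 * (∑ i, v i * w i) ^ 2 ≤ L * qf A w := by
    calc L ^ 2 * (∑ i, v i * w i) ^ 2 = (L * ∑ i, v i * w i) ^ 2 := by ring
      _ ≤ L * qf A w := hcs
  nlinarith [h2, hL]

/-- The core deterministic estimate. -/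
lemma det_bound {n m : ℕ} (hn : 0 < n) (hm : 0 < m)
    (B : Matrix (Fin n) (Fin n) ℝ) (hsym : ∀ i j, B i j = B j i)
    (hpsd : ∀ u, 0 ≤ qf B u) (hdiag : ∀ i, 0 < B i i)
    (R : ℝ) (hR : 0 < R) (a : Fin m → ℝ) (ha : ∀ l, a l ^ 2 = R ^ 2)
    (ind : Fin n → Fin m → ℝ) (hind01 : ∀ i l, ind i l = 0 ∨ ind i l = 1)
    (δ : ℝ) (hδ0 : 0 < δ) (hδ1 : δ < 1)
    (hcount : ∀ i, (1 - δ) * m / 2 ≤ ∑ l, ind i l)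
    (K : Matrix (Fin n) (Fin n) ℝ)
    (hK : ∀ i j, K i j = (∑ l, (a l * ind i l) * (a l * ind j l)) * B i j) :
    (1 - δ) ^ 2 / 4 * (B.trace / lamMax B) ≤ K.trace / lamMax K ∧
      K.trace / lamMax K ≤ 4 / (1 - δ) ^ 2 * (B.trace / lamMax B) := by
  have hm' : (0 : ℝ) < m := by exact_mod_cast hm
  have hδ' : (0 : ℝ) < 1 - δ := by linarith
  set L := lamMax B with hLdef
  set T := B.trace with hTdef
  -- basic positivity
  have hqf_single : ∀ i0 : Fin n, qf B (Pi.single i0 1) = B i0 i0 := by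
    intro i0
    simp only [qf, Pi.single_apply]
    rw [Finset.sum_eq_single i0]
    · rw [Finset.sum_eq_single i0] <;> simp_all
    · intro i _ hi
      refine Finset.sum_eq_zero fun j _ => ?_
      rw [if_neg hi]; ring
    · simp
  have hsq_single : ∀ i0 : Fin n, (∑ i, (Pi.single i0 1 : Fin n → ℝ) i ^ 2) = 1 := by
    intro i0
    rw [Finset.sum_eq_single i0]
    · simp
    · intro j _ hj; rw [Pi.single_eq_of_ne hj]; ring
    · simp
  have hL0 : 0 < L := by
    have := qf_le_lamMax B (hsq_single ⟨0, hn⟩)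
    rw [hqf_single] at this
    exact lt_of_lt_of_le (hdiag _) this
  haveI : Nonempty (Fin n) := ⟨⟨0, hn⟩⟩
  have hT0 : 0 < T := by
    rw [hTdef, Matrix.trace]
    exact Finset.sum_pos (fun i _ => hdiag i) Finset.univ_nonempty
  -- indicator facts
  have hind_nonneg : ∀ i l, 0 ≤ ind i l := by
    intro i l; rcases hind01 i l with h | h <;> rw [h] <;> norm_num
  have hind_le_one : ∀ i l, ind i l ≤ 1 := by
    intro i l; rcases hind01 i l with h | h <;> rw [h] <;> norm_num
  have hind_sq : ∀ i l, ind i l ^ 2 = ind i l := by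
    intro i l; rcases hind01 i l with h | h <;> rw [h] <;> norm_num
  set s : Fin n → ℝ := fun i => ∑ l, ind i l with hsdef
  have hs_le : ∀ i, s i ≤ m := by
    intro i
    calc s i ≤ ∑ _l : Fin m, (1 : ℝ) := Finset.sum_le_sum fun l _ => hind_le_one i l
      _ = m := by simp
  have hs_ge : ∀ i, (1 - δ) * m / 2 ≤ s i := hcount
  -- diagonal of K
  have hKdiag : ∀ i, K i i = R ^ 2 * s i * B i i := by
    intro i
    rw [hK]
    congr 1
    rw [hsdef]
    simp only [Finset.mul_sum]
    refine Finset.sum_congr rfl fun l _ => ?_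
    have := hind_sq i l
    nlinarith [ha l, hind_sq i l]
  -- trace bounds
  have htrK : K.trace = ∑ i, R ^ 2 * s i * B i i := by
    rw [Matrix.trace]
    exact Finset.sum_congr rfl fun i _ => hKdiag i
  have htrB : T = ∑ i, B i i := rfl
  have htrK_low : R ^ 2 * ((1 - δ) * m / 2) * T ≤ K.trace := by
    rw [htrK, htrB, Finset.mul_sum]
    refine Finset.sum_le_sum fun i _ => ?_
    have h1 := hs_ge i
    have h2 := (hdiag i).le
    nlinarith [mul_le_mul_of_nonneg_left h1 (mul_nonneg (sq_nonneg R) h2)]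
  have htrK_high : K.trace ≤ R ^ 2 * m * T := by
    rw [htrK, htrB, Finset.mul_sum]
    refine Finset.sum_le_sum fun i _ => ?_
    have h1 := hs_le i
    have h2 := (hdiag i).le
    nlinarith [mul_le_mul_of_nonneg_left h1 (mul_nonneg (sq_nonneg R) h2)]
  -- quadratic form of K decomposes
  have hqfK : ∀ u : Fin n → ℝ, qf K u = ∑ l, qf B (fun i => u i * (a l * ind i l)) := by
    intro u
    have hterm : ∀ i j, u i * K i j * u j =
        ∑ l, (u i * (a l * ind i l)) * B i j * (u j * (a l * ind j l)) := by
      intro i j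
      rw [hK, Finset.sum_mul, Finset.mul_sum, Finset.sum_mul]
      refine Finset.sum_congr rfl fun l _ => by ring
    calc qf K u = ∑ i, ∑ j, ∑ l, (u i * (a l * ind i l)) * B i j * (u j * (a l * ind j l)) := by
          exact Finset.sum_congr rfl fun i _ => Finset.sum_congr rfl fun j _ => hterm i j
      _ = ∑ i, ∑ l, ∑ j, (u i * (a l * ind i l)) * B i j * (u j * (a l * ind j l)) :=
          Finset.sum_congr rfl fun i _ => Finset.sum_comm
      _ = ∑ l, ∑ i, ∑ j, (u i * (a l * ind i l)) * B i j * (u j * (a l * ind j l)) :=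
          Finset.sum_comm
      _ = ∑ l, qf B (fun i => u i * (a l * ind i l)) := rfl
  -- upper bound on lamMax K
  have hLK_high : lamMax K ≤ R ^ 2 * m * L := by
    rw [lamMax_eq_sSup]
    refine csSup_le (nonempty_SS hn K) ?_
    rintro t ⟨u, hu, rfl⟩
    rw [hqfK]
    calc (∑ l, qf B (fun i => u i * (a l * ind i l)))
        ≤ ∑ l, L * ∑ i, (u i * (a l * ind i l)) ^ 2 :=
          Finset.sum_le_sum fun l _ => qf_le B _
      _ = L * ∑ i, u i ^ 2 * (R ^ 2 * s i) := by
          have hsq : ∀ l i, (u i * (a l * ind i l)) ^ 2 = u i ^ 2 * (R ^ 2 * ind i l) := by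
            intro l i
            rw [mul_pow, mul_pow, ha l, hind_sq i l]
          rw [← Finset.mul_sum]
          congr 1
          rw [Finset.sum_comm]
          refine Finset.sum_congr rfl fun i _ => ?_
          show (∑ l, (u i * (a l * ind i l)) ^ 2) = u i ^ 2 * (R ^ 2 * ∑ l, ind i l)
          simp only [hsq]
          rw [← Finset.mul_sum, ← Finset.mul_sum]
      _ ≤ L * ∑ i, u i ^ 2 * (R ^ 2 * m) := by
          refine mul_le_mul_of_nonneg_left (Finset.sum_le_sum fun i _ => ?_) hL0.le
          exact mul_le_mul_of_nonneg_left
            (mul_le_mul_of_nonneg_left (hs_le i) (sq_nonneg R)) (sq_nonneg (u i))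
      _ = R ^ 2 * m * L := by
          rw [← Finset.sum_mul, hu]; ring
  -- lower bound on lamMax K
  obtain ⟨v, hv1, hvmax⟩ := exists_max hn B
  have heig := eigen_max hn B hsym hv1 hvmax
  set p : Fin m → ℝ := fun l => ∑ i, v i ^ 2 * ind i l with hpdef
  have hp_nonneg : ∀ l, 0 ≤ p l :=
    fun l => Finset.sum_nonneg fun i _ => mul_nonneg (sq_nonneg _) (hind_nonneg i l)
  have hp_sum : (1 - δ) * m / 2 ≤ ∑ l, p l := by
    have : (∑ l, p l) = ∑ i, v i ^ 2 * s i := by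
      rw [hpdef, Finset.sum_comm]
      refine Finset.sum_congr rfl fun i _ => ?_
      rw [hsdef, Finset.mul_sum]
    rw [this]
    calc (1 - δ) * m / 2 = ∑ i, v i ^ 2 * ((1 - δ) * m / 2) := by
          rw [← Finset.sum_mul, hv1, one_mul]
      _ ≤ ∑ i, v i ^ 2 * s i :=
          Finset.sum_le_sum fun i _ =>
            mul_le_mul_of_nonneg_left (hs_ge i) (sq_nonneg _)
  have hqfKv : L * R ^ 2 * ((1 - δ) ^ 2 * m / 4) ≤ qf K v := by
    rw [hqfK]
    have hterm : ∀ l, L * (R ^ 2 * p l ^ 2) ≤ qf B (fun i => v i * (a l * ind i l)) := by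
      intro l
      have h := vvt_le B hsym hpsd hL0 hv1 hvmax heig (fun i => v i * (a l * ind i l))
      have hinner : (∑ i, v i * (v i * (a l * ind i l))) = a l * p l := by
        rw [hpdef, Finset.mul_sum]
        exact Finset.sum_congr rfl fun i _ => by ring
      rw [hinner] at h
      calc L * (R ^ 2 * p l ^ 2) = L * (a l * p l) ^ 2 := by
            rw [mul_pow]; rw [ha l]
        _ ≤ _ := h
    calc L * R ^ 2 * ((1 - δ) ^ 2 * m / 4)
        ≤ L * R ^ 2 * ((∑ l, p l) ^ 2 / m) := by
          apply mul_le_mul_of_nonneg_left _ (by positivity)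
          rw [le_div_iff₀ hm']
          have hc0 : (0:ℝ) ≤ (1 - δ) * m / 2 := by positivity
          nlinarith [mul_le_mul hp_sum hp_sum hc0 (hc0.trans hp_sum)]
      _ ≤ L * R ^ 2 * ∑ l, p l ^ 2 := by
          apply mul_le_mul_of_nonneg_left _ (by positivity)
          rw [div_le_iff₀ hm']
          have h := sq_sum_le_card_mul_sum_sq (s := (Finset.univ : Finset (Fin m))) (f := p)
          simpa [Finset.card_univ, mul_comm] using h
      _ = ∑ l, L * (R ^ 2 * p l ^ 2) := by
          rw [Finset.mul_sum]; exact Finset.sum_congr rfl fun l _ => by ring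
      _ ≤ ∑ l, qf B (fun i => v i * (a l * ind i l)) :=
          Finset.sum_le_sum fun l _ => hterm l
  have hLK_low : R ^ 2 * ((1 - δ) ^ 2 * m / 4) * L ≤ lamMax K := by
    have := qf_le_lamMax K hv1
    calc R ^ 2 * ((1 - δ) ^ 2 * m / 4) * L = L * R ^ 2 * ((1 - δ) ^ 2 * m / 4) := by ring
      _ ≤ qf K v := hqfKv
      _ ≤ lamMax K := this
  have hLK0 : 0 < lamMax K := lt_of_lt_of_le (by positivity) hLK_low
  -- final arithmetic
  have hTL : T / L * L = T := div_mul_cancel₀ T hL0.ne'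
  have hdd : ((1 : ℝ) - δ) ^ 2 ≠ 0 := by positivity
  constructor
  · rw [le_div_iff₀ hLK0]
    calc (1 - δ) ^ 2 / 4 * (T / L) * lamMax K
        ≤ (1 - δ) ^ 2 / 4 * (T / L) * (R ^ 2 * m * L) := by
          apply mul_le_mul_of_nonneg_left hLK_high (by positivity)
      _ = (1 - δ) ^ 2 / 4 * R ^ 2 * m * (T / L * L) := by ring
      _ = (1 - δ) ^ 2 / 4 * (R ^ 2 * m * T) := by rw [hTL]; ring
      _ ≤ (1 - δ) / 2 * (R ^ 2 * m * T) := by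
          have hc : (1 - δ) ^ 2 / 4 ≤ (1 - δ) / 2 := by nlinarith
          exact mul_le_mul_of_nonneg_right hc (by positivity)
      _ = R ^ 2 * ((1 - δ) * m / 2) * T := by ring
      _ ≤ K.trace := htrK_low
  · rw [div_le_iff₀ hLK0]
    calc K.trace ≤ R ^ 2 * m * T := htrK_high
      _ = 4 / (1 - δ) ^ 2 * (1 - δ) ^ 2 * (R ^ 2 * m / 4) * (T / L * L) := by
          rw [div_mul_cancel₀ (4 : ℝ) hdd, hTL]; ring
      _ = 4 / (1 - δ) ^ 2 * (T / L) * (R ^ 2 * ((1 - δ) ^ 2 * m / 4) * L) := by ring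
      _ ≤ 4 / (1 - δ) ^ 2 * (T / L) * lamMax K := by
          apply mul_le_mul_of_nonneg_left hLK_low (by positivity)



lemma exp_neg_le (δ : ℝ) (hδ0 : 0 ≤ δ) : Real.exp (-δ) ≤ 1 - δ + δ ^ 2 / 2 := by
  have h3 : 1 + δ + δ ^ 2 / 2 + δ ^ 3 / 6 ≤ Real.exp δ := by
    have h := Real.sum_le_exp_of_nonneg hδ0 4
    simp only [Finset.sum_range_succ, Finset.sum_range_zero] at h
    norm_num [Nat.factorial] at h
    linarith [h]
  have hA : (0:ℝ) < 1 + δ + δ ^ 2 / 2 + δ ^ 3 / 6 := by positivity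
  have h6 : Real.exp (-δ) * (1 + δ + δ ^ 2 / 2 + δ ^ 3 / 6) ≤ 1 := by
    calc Real.exp (-δ) * (1 + δ + δ ^ 2 / 2 + δ ^ 3 / 6) ≤ Real.exp (-δ) * Real.exp δ :=
        mul_le_mul_of_nonneg_left h3 (Real.exp_pos _).le
      _ = 1 := by rw [← Real.exp_add]; simp
  nlinarith [Real.exp_pos (-δ), h6, hA, pow_nonneg hδ0 3, pow_nonneg hδ0 4, pow_nonneg hδ0 5]

lemma base_bound (δ : ℝ) (hδ0 : 0 < δ) (hδ1 : δ < 1) :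
    Real.exp (δ * (1 - δ) / 2) * ((1 + Real.exp (-δ)) / 2) ≤ Real.exp (-(δ ^ 2) / 4) := by
  have h1 : (1 + Real.exp (-δ)) / 2 ≤ 1 + (-δ / 2 + δ ^ 2 / 4) := by
    have := exp_neg_le δ hδ0.le
    linarith
  have h2 : (1 : ℝ) + (-δ / 2 + δ ^ 2 / 4) ≤ Real.exp (-δ / 2 + δ ^ 2 / 4) := by
    have := Real.add_one_le_exp (-δ / 2 + δ ^ 2 / 4)
    linarith
  calc Real.exp (δ * (1 - δ) / 2) * ((1 + Real.exp (-δ)) / 2)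
      ≤ Real.exp (δ * (1 - δ) / 2) * Real.exp (-δ / 2 + δ ^ 2 / 4) := by
        apply mul_le_mul_of_nonneg_left (h1.trans h2) (Real.exp_pos _).le
    _ = Real.exp (-(δ ^ 2) / 4) := by
        rw [← Real.exp_add]; congr 1; ring


lemma measurable_sum_mul {d : ℕ} (y : Fin d → ℝ) :
    Measurable fun v : Fin d → ℝ => ∑ k, v k * y k :=
  Finset.measurable_sum _ fun k _ => (measurable_pi_apply k).mul_const _

lemma measurable_sphNormalize (d : ℕ) : Measurable (sphNormalize d) := by
  refine measurable_pi_lambda _ fun k => ?_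
  have h1 : Measurable fun v : Fin d → ℝ => (Real.sqrt (∑ j, v j ^ 2))⁻¹ := by
    apply Measurable.inv
    exact Real.continuous_sqrt.measurable.comp
      (Finset.measurable_sum _ fun j _ => (measurable_pi_apply j).pow_const 2)
  exact h1.mul (measurable_pi_apply k)

lemma sign_equiv {d : ℕ} (y : Fin d → ℝ) (v : Fin d → ℝ) :
    0 ≤ ∑ k, v k * y k ↔ 0 ≤ ∑ k, sphNormalize d v k * y k := by
  set c := (Real.sqrt (∑ k, v k ^ 2))⁻¹ with hc
  have hsum : (∑ k, sphNormalize d v k * y k) = c * ∑ k, v k * y k := by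
    rw [Finset.mul_sum]
    refine Finset.sum_congr rfl fun k _ => ?_
    simp only [sphNormalize, Pi.smul_apply, smul_eq_mul, ← hc]
    ring
  rw [hsum]
  rcases eq_or_ne v 0 with rfl | hv
  · simp
  · have hpos : 0 < ∑ k, v k ^ 2 := by
      obtain ⟨k0, hk0⟩ := Function.ne_iff.1 hv
      have hk0' : v k0 ≠ 0 := by simpa using hk0
      exact Finset.sum_pos' (fun k _ => sq_nonneg _)
        ⟨k0, Finset.mem_univ k0, lt_of_le_of_ne (sq_nonneg _) (Ne.symm (pow_ne_zero 2 hk0'))⟩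
    have hcpos : 0 < c := by rw [hc]; positivity
    constructor
    · intro h; exact mul_nonneg hcpos.le h
    · intro h; nlinarith [h, hcpos]

lemma gauss_neg_pres (d : ℕ) :
    MeasurePreserving (fun v : Fin d → ℝ => fun k => -(v k)) (stdGaussPi d) (stdGaussPi d) := by
  apply measurePreserving_pi
  intro _
  refine ⟨measurable_neg, ?_⟩
  have h := gaussianReal_map_const_mul (μ := 0) (v := 1) (-1 : ℝ)
  have he : (fun x : ℝ => -x) = ((-1 : ℝ) * ·) := by funext t; ring
  rw [show (Neg.neg : ℝ → ℝ) = ((-1 : ℝ) * ·) from he, h]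
  norm_num

lemma gauss_halfspace (d : ℕ) (y : Fin d → ℝ) :
    1 ≤ 2 * stdGaussPi d {v | 0 ≤ ∑ k, v k * y k} := by
  set H : Set (Fin d → ℝ) := {v | 0 ≤ ∑ k, v k * y k} with hH
  set H' : Set (Fin d → ℝ) := {v | (∑ k, v k * y k) ≤ 0} with hH'
  have hHmeas : MeasurableSet H := measurableSet_le measurable_const (measurable_sum_mul y)
  haveI : IsProbabilityMeasure (stdGaussPi d) := by
    unfold stdGaussPi; infer_instance
  have hpre : (fun v : Fin d → ℝ => fun k => -(v k)) ⁻¹' H = H' := by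
    ext v
    simp only [hH, hH', Set.mem_preimage, Set.mem_setOf_eq]
    constructor
    · intro h
      have : (∑ k, -(v k) * y k) = -∑ k, v k * y k := by
        rw [← Finset.sum_neg_distrib]
        exact Finset.sum_congr rfl fun k _ => by ring
      rw [this] at h; linarith
    · intro h
      have : (∑ k, -(v k) * y k) = -∑ k, v k * y k := by
        rw [← Finset.sum_neg_distrib]
        exact Finset.sum_congr rfl fun k _ => by ring
      rw [this]; linarith
  have hmap : stdGaussPi d H' = stdGaussPi d H := by
    rw [← hpre]
    exact (gauss_neg_pres d).measure_preimage hHmeas.nullMeasurableSet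
  have hcover : H ∪ H' = Set.univ := by
    ext v; simp only [hH, hH', Set.mem_union, Set.mem_setOf_eq, Set.mem_univ, iff_true]
    exact le_total 0 _
  calc (1 : ℝ≥0∞) = stdGaussPi d Set.univ := (measure_univ).symm
    _ = stdGaussPi d (H ∪ H') := by rw [hcover]
    _ ≤ stdGaussPi d H + stdGaussPi d H' := measure_union_le H H'
    _ = 2 * stdGaussPi d H := by rw [hmap, two_mul]

lemma event_prob_half {Ω : Type} [MeasurableSpace Ω] (P : Measure Ω) [IsProbabilityMeasure P]
    {d : ℕ} (y : Fin d → ℝ) (wl : Ω → Fin d → ℝ) (hw : Measurable wl)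
    (hdir : Measure.map (fun ω => sphNormalize d (wl ω)) P = uniformSphere d) :
    1 / 2 ≤ (P {ω | 0 ≤ ∑ k, wl ω k * y k}).toReal := by
  set H : Set (Fin d → ℝ) := {v | 0 ≤ ∑ k, v k * y k} with hHdef
  have hHmeas : MeasurableSet H := measurableSet_le measurable_const (measurable_sum_mul y)
  have hset : {ω | 0 ≤ ∑ k, wl ω k * y k} = (fun ω => sphNormalize d (wl ω)) ⁻¹' H := by
    ext ω
    simpa [hHdef] using sign_equiv y (wl ω)
  have hpre2 : sphNormalize d ⁻¹' H = H := by
    ext v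
    simpa [hHdef] using (sign_equiv y v).symm
  have hPeq : P {ω | 0 ≤ ∑ k, wl ω k * y k} = stdGaussPi d H := by
    rw [hset]
    rw [← Measure.map_apply (f := fun ω => sphNormalize d (wl ω)) ((measurable_sphNormalize d).comp hw) hHmeas, hdir]
    rw [uniformSphere, Measure.map_apply (measurable_sphNormalize d) hHmeas, hpre2]
  rw [hPeq]
  have h1 := gauss_halfspace d y
  haveI : IsProbabilityMeasure (stdGaussPi d) := by unfold stdGaussPi; infer_instance
  have hfin : (2 * stdGaussPi d H) ≠ ⊤ := by
    refine ENNReal.mul_ne_top (by norm_num) (measure_ne_top _ _)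
  have h2 := ENNReal.toReal_mono hfin h1
  rw [ENNReal.toReal_mul, ENNReal.toReal_one] at h2
  norm_num at h2
  linarith


lemma chernoff_one {Ω : Type} [MeasurableSpace Ω] (P : Measure Ω) [IsProbabilityMeasure P]
    {d m : ℕ} (y : Fin d → ℝ) (w : Fin m → Ω → (Fin d → ℝ)) (hwmeas : ∀ l, Measurable (w l))
    (hindep : iIndepFun w P)
    (hdir : ∀ l, Measure.map (fun ω => sphNormalize d (w l ω)) P = uniformSphere d)
    (δ : ℝ) (hδ0 : 0 < δ) (hδ1 : δ < 1) :
    (P {ω | (∑ l, if 0 ≤ ∑ k, w l ω k * y k then (1 : ℝ) else 0) ≤ (1 - δ) * m / 2}).toReal ≤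
      Real.exp (-(δ ^ 2) * m / 4) := by
  classical
  set g : (Fin d → ℝ) → ℝ := fun v => if 0 ≤ ∑ k, v k * y k then (1 : ℝ) else 0 with hg
  have hgmeas : Measurable g :=
    Measurable.ite (measurableSet_le measurable_const (measurable_sum_mul y))
      measurable_const measurable_const
  set X : Fin m → Ω → ℝ := fun l ω => g (w l ω) with hX
  have hXmeas : ∀ l, Measurable (X l) := fun l => hgmeas.comp (hwmeas l)
  have hXindep : iIndepFun X P :=
    hindep.comp (fun _ => g) (fun _ => hgmeas)
  have hX01 : ∀ l ω, X l ω = 0 ∨ X l ω = 1 := by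
    intro l ω
    by_cases h : 0 ≤ ∑ k, w l ω k * y k <;> simp [hX, hg, h]
  -- mgf of each X l
  have hmgf_le : ∀ l, mgf (X l) P (-δ) ≤ (1 + Real.exp (-δ)) / 2 := by
    intro l
    set A : Set Ω := {ω | 0 ≤ ∑ k, w l ω k * y k} with hA
    have hAmeas : MeasurableSet A :=
      measurableSet_le measurable_const ((measurable_sum_mul y).comp (hwmeas l))
    have hxind : ∀ ω, X l ω = Set.indicator A (fun _ => (1 : ℝ)) ω := by
      intro ω
      have hmem : ω ∈ A ↔ 0 ≤ ∑ k, w l ω k * y k := Iff.rfl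
      by_cases h : 0 ≤ ∑ k, w l ω k * y k
      · rw [Set.indicator_of_mem (hmem.2 h)]; simp [hX, hg, h]
      · rw [Set.indicator_of_notMem (fun hc => h (hmem.1 hc))]; simp [hX, hg, h]
    have hXint : Integrable (X l) P := by
      have : Integrable (Set.indicator A (fun _ => (1 : ℝ))) P :=
        (integrable_const (1 : ℝ)).indicator hAmeas
      exact this.congr (ae_of_all _ fun ω => (hxind ω).symm)
    have hInt : (∫ ω, X l ω ∂P) = (P A).toReal := by
      rw [integral_congr_ae (ae_of_all _ hxind), integral_indicator_const _ hAmeas]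
      simp [measureReal_def]
    have hexp_eq : ∀ ω, Real.exp (-δ * X l ω) = 1 + (Real.exp (-δ) - 1) * X l ω := by
      intro ω
      rcases hX01 l ω with h | h <;> rw [h] <;> simp
    have hmgf_eq : mgf (X l) P (-δ) = 1 + (Real.exp (-δ) - 1) * (P A).toReal := by
      rw [mgf]
      rw [integral_congr_ae (ae_of_all _ hexp_eq)]
      rw [integral_add (integrable_const 1) (hXint.const_mul _)]
      rw [integral_const_mul, hInt]
      simp
    rw [hmgf_eq]
    have hp : 1 / 2 ≤ (P A).toReal := event_prob_half P y (w l) (hwmeas l) (hdir l)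
    have hc : Real.exp (-δ) - 1 ≤ 0 := by
      have : Real.exp (-δ) ≤ 1 := Real.exp_le_one_iff.2 (by linarith)
      linarith
    nlinarith [hp, hc]
  -- Chernoff
  set S : Ω → ℝ := ∑ l, X l with hS
  have hSapp : ∀ ω, S ω = ∑ l, X l ω := by
    intro ω; rw [hS]; simp
  have hSmeas : Measurable S := by
    have he : S = fun ω => ∑ l, X l ω := funext hSapp
    rw [he]; exact Finset.measurable_sum _ fun l _ => hXmeas l
  have hS_nonneg : ∀ ω, 0 ≤ S ω := by
    intro ω; rw [hSapp]
    exact Finset.sum_nonneg fun l _ => by rcases hX01 l ω with h | h <;> rw [h] <;> norm_num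
  have hint : Integrable (fun ω => Real.exp (-δ * S ω)) P := by
    refine Integrable.mono' (integrable_const 1)
      ((hSmeas.const_mul _).exp.aestronglyMeasurable) (ae_of_all _ fun ω => ?_)
    rw [Real.norm_eq_abs, Real.abs_exp]
    exact Real.exp_le_one_iff.2 (mul_nonpos_of_nonpos_of_nonneg (by linarith) (hS_nonneg ω))
  have hchern := measure_le_le_exp_mul_mgf (μ := P) (X := S) ((1 - δ) * m / 2)
    (t := -δ) (by linarith) hint
  have hmgfS : mgf S P (-δ) ≤ ((1 + Real.exp (-δ)) / 2) ^ m := by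
    rw [hS, hXindep.mgf_sum hXmeas]
    calc (∏ l : Fin m, mgf (X l) P (-δ)) ≤ ∏ _l : Fin m, (1 + Real.exp (-δ)) / 2 :=
          Finset.prod_le_prod (fun l _ => mgf_nonneg) (fun l _ => hmgf_le l)
      _ = ((1 + Real.exp (-δ)) / 2) ^ m := by
          rw [Finset.prod_const, Finset.card_univ, Fintype.card_fin]
  have hq0 : (0:ℝ) < (1 + Real.exp (-δ)) / 2 := by positivity
  have hfinal : Real.exp (-(-δ) * ((1 - δ) * m / 2)) * mgf S P (-δ) ≤
      Real.exp (-(δ ^ 2) * m / 4) := by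
    calc Real.exp (-(-δ) * ((1 - δ) * m / 2)) * mgf S P (-δ)
        ≤ Real.exp (δ * ((1 - δ) * m / 2)) * ((1 + Real.exp (-δ)) / 2) ^ m := by
          rw [neg_neg]
          exact mul_le_mul_of_nonneg_left hmgfS (Real.exp_pos _).le
      _ = (Real.exp (δ * (1 - δ) / 2) * ((1 + Real.exp (-δ)) / 2)) ^ m := by
          rw [mul_pow, ← Real.exp_nat_mul]
          congr 1
          congr 1
          push_cast
          ring
      _ ≤ (Real.exp (-(δ ^ 2) / 4)) ^ m := by
          apply pow_le_pow_left₀ (by positivity) (base_bound δ hδ0 hδ1)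
      _ = Real.exp (-(δ ^ 2) * m / 4) := by
          rw [← Real.exp_nat_mul]
          congr 1
          push_cast
          ring
  have hsetEq : {ω | (∑ l, if 0 ≤ ∑ k, w l ω k * y k then (1 : ℝ) else 0) ≤ (1 - δ) * m / 2}
      = {ω | S ω ≤ (1 - δ) * m / 2} := by
    ext ω
    simp only [Set.mem_setOf_eq, hSapp, hX, hg]
  rw [hsetEq]
  exact hchern.trans hfinal


lemma prob_bound {n d m : ℕ} (hn : 0 < n) {Ω : Type} [MeasurableSpace Ω] (P : Measure Ω)
    [IsProbabilityMeasure P] (x : Fin n → Fin d → ℝ)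
    (w : Fin m → Ω → (Fin d → ℝ)) (hwmeas : ∀ l, Measurable (w l))
    (hindep : iIndepFun w P)
    (hdir : ∀ l, Measure.map (fun ω => sphNormalize d (w l ω)) P = uniformSphere d)
    (δ ε : ℝ) (hδ0 : 0 < δ) (hδ1 : δ < 1) (hε0 : 0 < ε) (hε1 : ε < 1)
    (hm : 4 * Real.log (n / ε) / δ ^ 2 ≤ m) :
    ENNReal.ofReal (1 - ε) ≤
      P {ω | ∀ i, (1 - δ) * m / 2 <
          ∑ l, (if 0 ≤ ∑ k, w l ω k * x i k then (1 : ℝ) else 0)} := by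
  classical
  have hn' : (0:ℝ) < n := by exact_mod_cast hn
  set N : Fin n → Ω → ℝ :=
    fun i ω => ∑ l, (if 0 ≤ ∑ k, w l ω k * x i k then (1 : ℝ) else 0) with hN
  have hNmeas : ∀ i, Measurable (N i) := by
    intro i
    apply Finset.measurable_sum
    intro l _
    exact Measurable.ite
      ((measurableSet_le measurable_const ((measurable_sum_mul (x i)).comp (hwmeas l))))
      measurable_const measurable_const
  set c : ℝ := (1 - δ) * m / 2 with hc
  set A : Fin n → Set Ω := fun i => {ω | N i ω ≤ c} with hA
  have hAmeas : ∀ i, MeasurableSet (A i) :=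
    fun i => measurableSet_le (hNmeas i) measurable_const
  -- tail bounds
  have hexp_le : Real.exp (-(δ ^ 2) * m / 4) ≤ ε / n := by
    have hδ2 : (0:ℝ) < δ ^ 2 := by positivity
    have h1 : 4 * Real.log (n / ε) ≤ m * δ ^ 2 := by
      have h := mul_le_mul_of_nonneg_right hm hδ2.le
      rw [div_mul_cancel₀ _ hδ2.ne'] at h
      linarith
    have h2 : Real.exp (-(δ ^ 2) * m / 4) ≤ Real.exp (-(Real.log (n / ε))) := by
      apply Real.exp_le_exp.2
      nlinarith
    calc Real.exp (-(δ ^ 2) * m / 4) ≤ Real.exp (-(Real.log (n / ε))) := h2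
      _ = ε / n := by
          rw [Real.exp_neg, Real.exp_log (by positivity), inv_div]
  have hP_le : ∀ i, P (A i) ≤ ENNReal.ofReal (ε / n) := by
    intro i
    have h := (chernoff_one P (x i) w hwmeas hindep hdir δ hδ0 hδ1).trans hexp_le
    have h2 := ENNReal.ofReal_le_ofReal h
    rwa [ENNReal.ofReal_toReal (measure_ne_top P _)] at h2
  -- union bound
  have hU : P (⋃ i, A i) ≤ ENNReal.ofReal ε := by
    calc P (⋃ i, A i) ≤ ∑' i, P (A i) := measure_iUnion_le _
      _ = ∑ i : Fin n, P (A i) := tsum_fintype _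
      _ ≤ ∑ _i : Fin n, ENNReal.ofReal (ε / n) :=
          Finset.sum_le_sum fun i _ => hP_le i
      _ = (n : ℝ≥0∞) * ENNReal.ofReal (ε / n) := by
          rw [Finset.sum_const, Finset.card_univ, Fintype.card_fin, nsmul_eq_mul]
      _ = ENNReal.ofReal ε := by
          rw [← ENNReal.ofReal_natCast n, ← ENNReal.ofReal_mul (by positivity)]
          congr 1
          field_simp
  have hGset : (⋃ i, A i)ᶜ = {ω | ∀ i, c < N i ω} := by
    ext ω
    simp only [Set.mem_compl_iff, Set.mem_iUnion, Set.mem_setOf_eq, hA, not_exists, not_le]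
  have hcompl : ENNReal.ofReal (1 - ε) ≤ P ((⋃ i, A i)ᶜ) := by
    rw [prob_compl_eq_one_sub (MeasurableSet.iUnion hAmeas)]
    have h1 : ENNReal.ofReal (1 - ε) ≤ 1 - ENNReal.ofReal ε := by
      apply ENNReal.le_sub_of_add_le_right ENNReal.ofReal_ne_top
      rw [← ENNReal.ofReal_add (by linarith) (by linarith)]
      simp [show (1:ℝ) - ε + ε = 1 from by ring]
    exact h1.trans (tsub_le_tsub_left hU 1)
  rw [hGset] at hcompl
  exact hcompl

end EffRank

open EffRank

/-- For a two-layer ReLU network with outer weights of fixed magnitude `R` and independent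
inner weights whose directions are uniform on the sphere, if `m ≥ 4 log(n/ε)/δ²` then with
probability at least `1 − ε` the effective rank of `K_inner = (YYᵀ)⊙(XXᵀ)` is within the
factor `4/(1−δ)²` of the effective rank of `X Xᵀ`. -/
theorem inner_effective_rank_const_outer
    (n d m : ℕ) (hn : 0 < n) (hd : 2 ≤ d)
    {Ω : Type} [MeasurableSpace Ω] (P : Measure Ω) [IsProbabilityMeasure P]
    (x : Fin n → Fin d → ℝ) (hx : ∀ i, x i ≠ 0)
    (X : Matrix (Fin n) (Fin d) ℝ) (hX : X = Matrix.of fun i j => x i j) (hXne : X ≠ 0)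
    (R : ℝ) (hR : 0 < R) (a : Fin m → ℝ) (ha : ∀ l, |a l| = R)
    (w : Fin m → Ω → (Fin d → ℝ))
    (hwmeas : ∀ l, Measurable (w l))
    (hindep : iIndepFun w P)
    (hdir : ∀ l, Measure.map (fun ω => sphNormalize d (w l ω)) P = uniformSphere d)
    (δ ε : ℝ) (hδ : δ ∈ Set.Ioo (0 : ℝ) 1) (hε : ε ∈ Set.Ioo (0 : ℝ) 1)
    (hm : 4 * Real.log (n / ε) / δ ^ 2 ≤ m)
    (Y : Ω → Matrix (Fin n) (Fin m) ℝ)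
    (hY : ∀ ω i l, Y ω i l = a l * (if 0 ≤ ∑ k, w l ω k * x i k then (1 : ℝ) else 0))
    (Kin : Ω → Matrix (Fin n) (Fin n) ℝ)
    (hKin : ∀ ω, Kin ω = (Y ω * (Y ω)ᵀ).hadamard (X * Xᵀ)) :
    ENNReal.ofReal (1 - ε) ≤
      P {ω | (1 - δ) ^ 2 / 4 * ((X * Xᵀ).trace / lamMax (X * Xᵀ)) ≤
              (Kin ω).trace / lamMax (Kin ω) ∧
            (Kin ω).trace / lamMax (Kin ω) ≤
              4 / (1 - δ) ^ 2 * ((X * Xᵀ).trace / lamMax (X * Xᵀ))} := by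
  obtain ⟨hδ0, hδ1⟩ := hδ
  obtain ⟨hε0, hε1⟩ := hε
  have hn' : (0:ℝ) < n := by exact_mod_cast hn
  have hm0 : 0 < m := by
    have hlog : 0 < Real.log ((n : ℝ) / ε) := by
      apply Real.log_pos
      rw [lt_div_iff₀ hε0]
      nlinarith [hn', hε1, show (1:ℝ) ≤ (n:ℝ) from by exact_mod_cast hn]
    have : (0:ℝ) < m := lt_of_lt_of_le (by positivity) hm
    exact_mod_cast this
  -- the matrix B = X Xᵀ
  set B : Matrix (Fin n) (Fin n) ℝ := X * Xᵀ with hB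
  have hBapply : ∀ i j, B i j = ∑ k, x i k * x j k := by
    intro i j
    rw [hB, Matrix.mul_apply, hX]
    exact Finset.sum_congr rfl fun k _ => rfl
  have hsym : ∀ i j, B i j = B j i := by
    intro i j
    rw [hBapply, hBapply]
    exact Finset.sum_congr rfl fun k _ => mul_comm _ _
  have hpsd : ∀ u, 0 ≤ qf B u := by
    intro u
    have hexp : qf B u = ∑ k, (∑ i, u i * x i k) * (∑ j, u j * x j k) := by
      have h1 : ∀ i j, u i * B i j * u j = ∑ k, (u i * x i k) * (u j * x j k) := by
        intro i j
        rw [hBapply, Finset.mul_sum, Finset.sum_mul]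
        exact Finset.sum_congr rfl fun k _ => by ring
      calc qf B u = ∑ i, ∑ j, ∑ k, (u i * x i k) * (u j * x j k) :=
            Finset.sum_congr rfl fun i _ => Finset.sum_congr rfl fun j _ => h1 i j
        _ = ∑ i, ∑ k, ∑ j, (u i * x i k) * (u j * x j k) :=
            Finset.sum_congr rfl fun i _ => Finset.sum_comm
        _ = ∑ k, ∑ i, ∑ j, (u i * x i k) * (u j * x j k) := Finset.sum_comm
        _ = ∑ k, (∑ i, u i * x i k) * (∑ j, u j * x j k) := by
            refine Finset.sum_congr rfl fun k _ => ?_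
            rw [Finset.sum_mul]
            refine Finset.sum_congr rfl fun i _ => ?_
            rw [Finset.mul_sum]
    rw [hexp]
    exact Finset.sum_nonneg fun k _ => mul_self_nonneg _
  have hdiag : ∀ i, 0 < B i i := by
    intro i
    rw [hBapply]
    obtain ⟨k0, hk0⟩ := Function.ne_iff.1 (hx i)
    have hk0' : x i k0 ≠ 0 := by simpa using hk0
    refine Finset.sum_pos' (fun k _ => mul_self_nonneg _) ⟨k0, Finset.mem_univ k0, ?_⟩
    exact mul_self_pos.2 hk0'
  have hprob := prob_bound hn P x w hwmeas hindep hdir δ ε hδ0 hδ1 hε0 hε1 hm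
  refine hprob.trans (measure_mono ?_)
  intro ω hω
  simp only [Set.mem_setOf_eq] at hω ⊢
  have ha' : ∀ l, a l ^ 2 = R ^ 2 := fun l => by rw [← sq_abs, ha l]
  set ind : Fin n → Fin m → ℝ :=
    fun i l => if 0 ≤ ∑ k, w l ω k * x i k then (1 : ℝ) else 0 with hind
  have hind01 : ∀ i l, ind i l = 0 ∨ ind i l = 1 := by
    intro i l
    by_cases h : 0 ≤ ∑ k, w l ω k * x i k <;> simp [hind, h]
  have hcount : ∀ i, (1 - δ) * m / 2 ≤ ∑ l, ind i l := fun i => (hω i).le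
  have hK : ∀ i j, (Kin ω) i j = (∑ l, (a l * ind i l) * (a l * ind j l)) * B i j := by
    intro i j
    rw [hKin ω, Matrix.hadamard_apply, Matrix.mul_apply]
    congr 1
    refine Finset.sum_congr rfl fun l _ => ?_
    rw [Matrix.transpose_apply, hY ω i l, hY ω j l]
  exact det_bound hn hm0 B hsym hpsd hdiag R hR a ha' ind hind01 δ hδ0 hδ1 hcount (Kin ω) hK
end

section
/- Let φ(z) = max(0, z) be applied entrywise, let X ∈ ℝ^{n×d} be nonzero, and let W ∈ ℝ^{m×d} with m ≥ d have full rank d. Then max(‖φ(W Xᵀ)‖_F², ‖φ(−W Xᵀ)‖_F²) / max(‖φ(W Xᵀ)‖₂², ‖φ(−W Xᵀ)‖₂²) ≤ 4 · (‖W‖₂²/σ_min(W)²) · Tr(X Xᵀ)/λ_1(X Xᵀ). -/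
open Matrix

/-- Operator (spectral) norm of a rectangular real matrix. -/
noncomputable def opNorm {m n : ℕ} (A : Matrix (Fin m) (Fin n) ℝ) : ℝ :=
  sSup {t | ∃ u : Fin n → ℝ, (∑ j, u j ^ 2) = 1 ∧
    t = Real.sqrt (∑ i, (∑ j, A i j * u j) ^ 2)}

/-- Smallest singular value of a rectangular real matrix. -/
noncomputable def sigMin {m n : ℕ} (A : Matrix (Fin m) (Fin n) ℝ) : ℝ :=
  sInf {t | ∃ u : Fin n → ℝ, (∑ j, u j ^ 2) = 1 ∧
    t = Real.sqrt (∑ i, (∑ j, A i j * u j) ^ 2)}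

/-- Squared Frobenius norm. -/
def frobSq {m n : ℕ} (A : Matrix (Fin m) (Fin n) ℝ) : ℝ := ∑ i, ∑ j, (A i j) ^ 2

/-- Entrywise ReLU. -/
def reluM {m n : ℕ} (A : Matrix (Fin m) (Fin n) ℝ) : Matrix (Fin m) (Fin n) ℝ :=
  A.map fun z => max 0 z

namespace ReluAux

/-- norm of `A *ᵥ u`. -/
noncomputable def mq {m n : ℕ} (A : Matrix (Fin m) (Fin n) ℝ) (u : Fin n → ℝ) : ℝ :=
  Real.sqrt (∑ i, (∑ j, A i j * u j) ^ 2)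

def opSet {m n : ℕ} (A : Matrix (Fin m) (Fin n) ℝ) : Set ℝ :=
  {t | ∃ u : Fin n → ℝ, (∑ j, u j ^ 2) = 1 ∧
    t = Real.sqrt (∑ i, (∑ j, A i j * u j) ^ 2)}

variable {m n : ℕ}

lemma opNorm_eq (A : Matrix (Fin m) (Fin n) ℝ) : opNorm A = sSup (opSet A) := rfl
lemma sigMin_eq (A : Matrix (Fin m) (Fin n) ℝ) : sigMin A = sInf (opSet A) := rfl

lemma mq_nonneg (A : Matrix (Fin m) (Fin n) ℝ) (u : Fin n → ℝ) : 0 ≤ mq A u :=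
  Real.sqrt_nonneg _

lemma mem_opSet (A : Matrix (Fin m) (Fin n) ℝ) {u : Fin n → ℝ} (hu : (∑ j, u j ^ 2) = 1) :
    mq A u ∈ opSet A := ⟨u, hu, rfl⟩

lemma opSet_le (A : Matrix (Fin m) (Fin n) ℝ) {t : ℝ} (ht : t ∈ opSet A) :
    t ≤ Real.sqrt (frobSq A) := by
  obtain ⟨u, hu, rfl⟩ := ht
  apply Real.sqrt_le_sqrt
  unfold frobSq
  refine Finset.sum_le_sum fun i _ => ?_
  calc (∑ j, A i j * u j) ^ 2 ≤ (∑ j, A i j ^ 2) * ∑ j, u j ^ 2 :=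
        Finset.sum_mul_sq_le_sq_mul_sq _ _ _
    _ = ∑ j, A i j ^ 2 := by rw [hu, mul_one]

lemma bddAbove_opSet (A : Matrix (Fin m) (Fin n) ℝ) : BddAbove (opSet A) :=
  ⟨Real.sqrt (frobSq A), fun _ ht => opSet_le A ht⟩

lemma bddBelow_opSet (A : Matrix (Fin m) (Fin n) ℝ) : BddBelow (opSet A) :=
  ⟨0, by rintro t ⟨u, hu, rfl⟩; exact Real.sqrt_nonneg _⟩

lemma single_unit [NeZero n] : (∑ j : Fin n, (Pi.single (0 : Fin n) (1:ℝ) : Fin n → ℝ) j ^ 2) = 1 := by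
  simp [Pi.single_apply]

lemma opSet_nonempty [NeZero n] (A : Matrix (Fin m) (Fin n) ℝ) : (opSet A).Nonempty :=
  ⟨_, mem_opSet A single_unit⟩

lemma mq_le_opNorm (A : Matrix (Fin m) (Fin n) ℝ) {u : Fin n → ℝ}
    (hu : (∑ j, u j ^ 2) = 1) : mq A u ≤ opNorm A :=
  le_csSup (bddAbove_opSet A) (mem_opSet A hu)

lemma sigMin_le_mq (A : Matrix (Fin m) (Fin n) ℝ) {u : Fin n → ℝ}
    (hu : (∑ j, u j ^ 2) = 1) : sigMin A ≤ mq A u :=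
  csInf_le (bddBelow_opSet A) (mem_opSet A hu)

lemma opNorm_nonneg [NeZero n] (A : Matrix (Fin m) (Fin n) ℝ) : 0 ≤ opNorm A :=
  le_trans (mq_nonneg A _) (mq_le_opNorm A single_unit)

lemma opNorm_le [NeZero n] (A : Matrix (Fin m) (Fin n) ℝ) {c : ℝ}
    (h : ∀ u : Fin n → ℝ, (∑ j, u j ^ 2) = 1 → mq A u ≤ c) : opNorm A ≤ c := by
  refine csSup_le (opSet_nonempty A) ?_
  rintro t ⟨u, hu, rfl⟩
  exact h u hu

lemma mq_smul (A : Matrix (Fin m) (Fin n) ℝ) (c : ℝ) (u : Fin n → ℝ) :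
    mq A (fun j => c * u j) = |c| * mq A u := by
  unfold mq
  have h : ∀ i, (∑ j, A i j * (c * u j)) = c * ∑ j, A i j * u j := by
    intro i; rw [Finset.mul_sum]; congr 1; ext j; ring
  simp_rw [h, mul_pow, ← Finset.mul_sum]
  rw [Real.sqrt_mul (sq_nonneg c), Real.sqrt_sq_eq_abs]

lemma mq_le (A : Matrix (Fin m) (Fin n) ℝ) (v : Fin n → ℝ) [NeZero n] :
    mq A v ≤ opNorm A * Real.sqrt (∑ j, v j ^ 2) := by
  by_cases h : (∑ j, v j ^ 2) = 0
  · have hv : ∀ j, v j = 0 := by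
      intro j
      have := (Finset.sum_eq_zero_iff_of_nonneg (fun j _ => sq_nonneg (v j))).mp h j
        (Finset.mem_univ j)
      exact pow_eq_zero_iff two_ne_zero |>.mp this
    have : mq A v = 0 := by
      unfold mq
      simp [hv]
    rw [this, h]
    simp
  · have hpos : 0 < ∑ j, v j ^ 2 :=
      lt_of_le_of_ne (Finset.sum_nonneg fun j _ => sq_nonneg _) (Ne.symm h)
    set s := Real.sqrt (∑ j, v j ^ 2) with hs
    have hspos : 0 < s := Real.sqrt_pos.mpr hpos
    have hs2 : s ^ 2 = ∑ j, v j ^ 2 := Real.sq_sqrt hpos.le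
    have hunit : (∑ j, (s⁻¹ * v j) ^ 2) = 1 := by
      simp_rw [mul_pow, ← Finset.mul_sum]
      rw [← hs2]
      field_simp
    have := mq_le_opNorm A hunit
    rw [mq_smul A s⁻¹ v, abs_of_pos (inv_pos.mpr hspos)] at this
    calc mq A v = s * (s⁻¹ * mq A v) := by field_simp
      _ ≤ s * opNorm A := by
          apply mul_le_mul_of_nonneg_left this hspos.le
      _ = opNorm A * s := mul_comm _ _

lemma sigMin_mul_le (A : Matrix (Fin m) (Fin n) ℝ) (v : Fin n → ℝ)
    (hσ : 0 ≤ sigMin A) :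
    sigMin A * Real.sqrt (∑ j, v j ^ 2) ≤ mq A v := by
  by_cases h : (∑ j, v j ^ 2) = 0
  · rw [h]
    simpa using mq_nonneg A v
  · have hpos : 0 < ∑ j, v j ^ 2 :=
      lt_of_le_of_ne (Finset.sum_nonneg fun j _ => sq_nonneg _) (Ne.symm h)
    set s := Real.sqrt (∑ j, v j ^ 2) with hs
    have hspos : 0 < s := Real.sqrt_pos.mpr hpos
    have hs2 : s ^ 2 = ∑ j, v j ^ 2 := Real.sq_sqrt hpos.le
    have hunit : (∑ j, (s⁻¹ * v j) ^ 2) = 1 := by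
      simp_rw [mul_pow, ← Finset.mul_sum]
      rw [← hs2]
      field_simp
    have := sigMin_le_mq A hunit
    rw [mq_smul A s⁻¹ v, abs_of_pos (inv_pos.mpr hspos)] at this
    calc sigMin A * s ≤ (s⁻¹ * mq A v) * s := by
          apply mul_le_mul_of_nonneg_right this hspos.le
      _ = mq A v := by field_simp

end ReluAux

namespace ReluAux
variable {m n : ℕ}

lemma euc_norm_eq (v : EuclideanSpace ℝ (Fin m)) :
    ‖v‖ = Real.sqrt (∑ i, v i ^ 2) := by
  rw [EuclideanSpace.norm_eq]
  congr 1
  refine Finset.sum_congr rfl fun i _ => ?_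
  rw [Real.norm_eq_abs, sq_abs]

lemma sqrt_sub_le (v w : Fin m → ℝ) :
    Real.sqrt (∑ i, (v i - w i) ^ 2) ≤
      Real.sqrt (∑ i, v i ^ 2) + Real.sqrt (∑ i, w i ^ 2) := by
  let v' : EuclideanSpace ℝ (Fin m) := (WithLp.equiv 2 (Fin m → ℝ)).symm v
  let w' : EuclideanSpace ℝ (Fin m) := (WithLp.equiv 2 (Fin m → ℝ)).symm w
  have h1 : ‖v' - w'‖ ≤ ‖v'‖ + ‖w'‖ := norm_sub_le _ _
  have hv : ‖v'‖ = Real.sqrt (∑ i, v i ^ 2) := euc_norm_eq v'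
  have hw : ‖w'‖ = Real.sqrt (∑ i, w i ^ 2) := euc_norm_eq w'
  have hvw : ‖v' - w'‖ = Real.sqrt (∑ i, (v i - w i) ^ 2) := by
    rw [euc_norm_eq]
    congr 1
  rw [hv, hw, hvw] at h1
  exact h1

lemma sigMin_pos [NeZero n] (W : Matrix (Fin m) (Fin n) ℝ) (hrank : W.rank = n) :
    0 < sigMin W := by
  have hinj : Function.Injective W.mulVecLin := by
    rw [← LinearMap.ker_eq_bot]
    have h1 := LinearMap.finrank_range_add_finrank_ker W.mulVecLin
    rw [Matrix.rank] at hrank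
    rw [hrank, Module.finrank_fin_fun] at h1
    have h2 : Module.finrank ℝ (LinearMap.ker W.mulVecLin) = 0 := by omega
    exact Submodule.finrank_eq_zero.mp h2
  set f : EuclideanSpace ℝ (Fin n) → ℝ :=
    fun u => Real.sqrt (∑ i, (∑ j, W i j * u j) ^ 2) with hf_def
  have hf : Continuous f := by
    apply Real.continuous_sqrt.comp
    apply continuous_finset_sum
    intro i _
    apply Continuous.pow
    apply continuous_finset_sum
    intro j _
    exact continuous_const.mul (EuclideanSpace.proj (𝕜 := ℝ) j).continuous
  have hsph : IsCompact (Metric.sphere (0 : EuclideanSpace ℝ (Fin n)) 1) :=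
    isCompact_sphere _ _
  have hne : (Metric.sphere (0 : EuclideanSpace ℝ (Fin n)) 1).Nonempty :=
    NormedSpace.sphere_nonempty.mpr zero_le_one
  obtain ⟨u₀, hu₀mem, hmin⟩ := hsph.exists_isMinOn hne hf.continuousOn
  have hu₀norm : ‖u₀‖ = 1 := mem_sphere_zero_iff_norm.mp hu₀mem
  have hu₀ne : u₀ ≠ 0 := by
    intro h; rw [h, norm_zero] at hu₀norm; norm_num at hu₀norm
  have hWu : W.mulVec u₀ ≠ 0 := by
    intro h
    apply hu₀ne
    apply WithLp.ofLp_injective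
    apply hinj
    simpa [Matrix.mulVecLin_apply] using h
  have hfpos : 0 < f u₀ := by
    rw [hf_def]
    apply Real.sqrt_pos.mpr
    obtain ⟨i, hi⟩ := Function.ne_iff.mp hWu
    apply Finset.sum_pos' (fun i _ => sq_nonneg _)
    refine ⟨i, Finset.mem_univ i, ?_⟩
    have hne0 : (∑ j, W i j * u₀ j) ≠ 0 := by
      simpa [Matrix.mulVec, dotProduct] using hi
    exact lt_of_le_of_ne (sq_nonneg _) (Ne.symm (pow_ne_zero 2 hne0))
  refine lt_of_lt_of_le hfpos ?_
  refine le_csInf (opSet_nonempty W) ?_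
  rintro t ⟨u, hu, rfl⟩
  have humem : ((WithLp.equiv 2 (Fin n → ℝ)).symm u) ∈
      Metric.sphere (0 : EuclideanSpace ℝ (Fin n)) 1 := by
    rw [mem_sphere_zero_iff_norm, euc_norm_eq]
    simp only [WithLp.equiv_symm_apply, WithLp.ofLp_toLp]
    rw [hu, Real.sqrt_one]
  have := isMinOn_iff.mp hmin _ humem
  simpa [hf_def, WithLp.equiv_symm_apply, WithLp.ofLp_toLp] using this

end ReluAux

namespace ReluAux
variable {m n d : ℕ}

lemma single_unit' (i0 : Fin n) :
    (∑ j : Fin n, (Pi.single i0 (1:ℝ) : Fin n → ℝ) j ^ 2) = 1 := by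
  simp [Pi.single_apply]

lemma rayleigh_eq (X : Matrix (Fin n) (Fin d) ℝ) (u : Fin n → ℝ) :
    (∑ i, ∑ j, u i * (X * Xᵀ) i j * u j) = ∑ k, (∑ j, Xᵀ k j * u j) ^ 2 := by
  simp_rw [Matrix.mul_apply, Matrix.transpose_apply]
  have h1 : ∀ i j : Fin n, u i * (∑ k, X i k * X j k) * u j
      = ∑ k, (X i k * u i) * (X j k * u j) := by
    intro i j
    rw [Finset.mul_sum, Finset.sum_mul]
    exact Finset.sum_congr rfl fun k _ => by ring
  simp_rw [h1]
  calc (∑ i, ∑ j, ∑ k, (X i k * u i) * (X j k * u j))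
      = ∑ i, ∑ k, ∑ j, (X i k * u i) * (X j k * u j) :=
        Finset.sum_congr rfl fun i _ => Finset.sum_comm
    _ = ∑ k, ∑ i, ∑ j, (X i k * u i) * (X j k * u j) := Finset.sum_comm
    _ = ∑ k, (∑ j, X j k * u j) ^ 2 := by
        refine Finset.sum_congr rfl fun k _ => ?_
        rw [sq, Finset.sum_mul_sum]

lemma trace_eq (X : Matrix (Fin n) (Fin d) ℝ) :
    (X * Xᵀ).trace = ∑ i, ∑ k, X i k ^ 2 := by
  simp [Matrix.trace, Matrix.diag, Matrix.mul_apply, sq]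

def lamSet (A : Matrix (Fin n) (Fin n) ℝ) : Set ℝ :=
  {t | ∃ u : Fin n → ℝ, (∑ i, u i ^ 2) = 1 ∧ t = ∑ i, ∑ j, u i * A i j * u j}

lemma lamMax_eq (A : Matrix (Fin n) (Fin n) ℝ) : lamMax A = sSup (lamSet A) := rfl

lemma lamSet_le (X : Matrix (Fin n) (Fin d) ℝ) {t : ℝ} (ht : t ∈ lamSet (X * Xᵀ)) :
    t ≤ opNorm Xᵀ ^ 2 := by
  obtain ⟨u, hu, rfl⟩ := ht
  rw [rayleigh_eq]
  have h1 : (∑ k, (∑ j, Xᵀ k j * u j) ^ 2) = mq Xᵀ u ^ 2 := by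
    rw [mq, Real.sq_sqrt (Finset.sum_nonneg fun k _ => sq_nonneg _)]
  rw [h1]
  exact pow_le_pow_left₀ (mq_nonneg _ _) (mq_le_opNorm Xᵀ hu) 2

lemma bddAbove_lamSet (X : Matrix (Fin n) (Fin d) ℝ) : BddAbove (lamSet (X * Xᵀ)) :=
  ⟨opNorm Xᵀ ^ 2, fun _ ht => lamSet_le X ht⟩

lemma lamMax_le_sq [NeZero n] (X : Matrix (Fin n) (Fin d) ℝ) :
    lamMax (X * Xᵀ) ≤ opNorm Xᵀ ^ 2 := by
  refine csSup_le ⟨_, ⟨Pi.single 0 1, single_unit' 0, rfl⟩⟩ fun t ht => lamSet_le X ht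

lemma lamMax_pos (X : Matrix (Fin n) (Fin d) ℝ) (i0 : Fin n) (k0 : Fin d)
    (h : X i0 k0 ≠ 0) : 0 < lamMax (X * Xᵀ) := by
  have hmem : (∑ i, ∑ j, (Pi.single i0 (1:ℝ) : Fin n → ℝ) i * (X * Xᵀ) i j
      * (Pi.single i0 (1:ℝ) : Fin n → ℝ) j) ∈ lamSet (X * Xᵀ) :=
    ⟨Pi.single i0 1, single_unit' i0, rfl⟩
  have hval : (∑ i, ∑ j, (Pi.single i0 (1:ℝ) : Fin n → ℝ) i * (X * Xᵀ) i j
      * (Pi.single i0 (1:ℝ) : Fin n → ℝ) j) = ∑ k, X i0 k ^ 2 := by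
    rw [rayleigh_eq]
    refine Finset.sum_congr rfl fun k _ => ?_
    congr 1
    simp [Matrix.transpose_apply, Pi.single_apply]
  have hpos : 0 < ∑ k, X i0 k ^ 2 := by
    refine Finset.sum_pos' (fun k _ => sq_nonneg _) ⟨k0, Finset.mem_univ k0, ?_⟩
    exact lt_of_le_of_ne (sq_nonneg _) (Ne.symm (pow_ne_zero 2 h))
  have := le_csSup (bddAbove_lamSet X) hmem
  rw [hval] at this
  exact lt_of_lt_of_le hpos this

lemma frobSq_nonneg (A : Matrix (Fin m) (Fin n) ℝ) : 0 ≤ frobSq A :=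
  Finset.sum_nonneg fun i _ => Finset.sum_nonneg fun j _ => sq_nonneg _

lemma relu_sq_le (z : ℝ) : (max 0 z) ^ 2 ≤ z ^ 2 := by
  rcases le_total z 0 with h | h
  · rw [max_eq_left h]; simpa using sq_nonneg z
  · rw [max_eq_right h]

lemma frob_relu_le (A : Matrix (Fin m) (Fin n) ℝ) : frobSq (reluM A) ≤ frobSq A := by
  unfold frobSq reluM
  refine Finset.sum_le_sum fun i _ => Finset.sum_le_sum fun j _ => ?_
  simp only [Matrix.map_apply]
  exact relu_sq_le _

lemma frob_relu_neg_le (A : Matrix (Fin m) (Fin n) ℝ) :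
    frobSq (reluM (-A)) ≤ frobSq A := by
  refine le_trans (frob_relu_le (-A)) (le_of_eq ?_)
  unfold frobSq
  simp

lemma frobSq_mul_le [NeZero d] (W : Matrix (Fin m) (Fin d) ℝ)
    (X : Matrix (Fin n) (Fin d) ℝ) :
    frobSq (W * Xᵀ) ≤ opNorm W ^ 2 * (X * Xᵀ).trace := by
  rw [trace_eq]
  unfold frobSq
  rw [Finset.sum_comm]
  rw [Finset.mul_sum]
  refine Finset.sum_le_sum fun k _ => ?_
  have h1 : (∑ i, (W * Xᵀ) i k ^ 2) = mq W (fun j => X k j) ^ 2 := by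
    rw [mq, Real.sq_sqrt (Finset.sum_nonneg fun i _ => sq_nonneg _)]
    simp_rw [Matrix.mul_apply, Matrix.transpose_apply]
  rw [h1]
  have h2 := mq_le W (fun j => X k j)
  calc mq W (fun j => X k j) ^ 2
      ≤ (opNorm W * Real.sqrt (∑ j, X k j ^ 2)) ^ 2 :=
        pow_le_pow_left₀ (mq_nonneg _ _) h2 2
    _ = opNorm W ^ 2 * ∑ j, X k j ^ 2 := by
        rw [mul_pow, Real.sq_sqrt (Finset.sum_nonneg fun j _ => sq_nonneg _)]

lemma relu_sub (a : ℝ) : max 0 a - max 0 (-a) = a := by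
  rcases le_total a 0 with h | h
  · rw [max_eq_left h, max_eq_right (neg_nonneg.mpr h)]; ring
  · rw [max_eq_right h, max_eq_left (neg_nonpos.mpr h)]; ring

lemma opNorm_relu_triangle [NeZero n] (A : Matrix (Fin m) (Fin n) ℝ) :
    opNorm A ≤ opNorm (reluM A) + opNorm (reluM (-A)) := by
  refine opNorm_le A fun u hu => ?_
  have h1 : ∀ i, (∑ j, A i j * u j)
      = (∑ j, reluM A i j * u j) - (∑ j, reluM (-A) i j * u j) := by
    intro i
    rw [← Finset.sum_sub_distrib]
    refine Finset.sum_congr rfl fun j _ => ?_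
    rw [← sub_mul]
    congr 1
    simpa [reluM] using (relu_sub (A i j)).symm
  calc mq A u = Real.sqrt (∑ i, ((∑ j, reluM A i j * u j)
        - (∑ j, reluM (-A) i j * u j)) ^ 2) := by
        unfold mq; simp_rw [h1]
    _ ≤ mq (reluM A) u + mq (reluM (-A)) u := sqrt_sub_le _ _
    _ ≤ opNorm (reluM A) + opNorm (reluM (-A)) :=
        add_le_add (mq_le_opNorm _ hu) (mq_le_opNorm _ hu)

lemma mq_mul (W : Matrix (Fin m) (Fin d) ℝ) (X : Matrix (Fin n) (Fin d) ℝ)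
    (u : Fin n → ℝ) :
    mq (W * Xᵀ) u = mq W (fun j => ∑ j', Xᵀ j j' * u j') := by
  unfold mq
  congr 1
  refine Finset.sum_congr rfl fun i _ => ?_
  congr 1
  simp_rw [Matrix.mul_apply, Finset.sum_mul, mul_assoc, Finset.mul_sum]
  exact Finset.sum_comm

lemma sig_op_le [NeZero n] [NeZero d] (W : Matrix (Fin m) (Fin d) ℝ)
    (X : Matrix (Fin n) (Fin d) ℝ) (hσ : 0 < sigMin W) :
    sigMin W * opNorm Xᵀ ≤ opNorm (W * Xᵀ) := by
  rw [mul_comm, ← le_div_iff₀ hσ]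
  refine opNorm_le Xᵀ fun u hu => ?_
  rw [le_div_iff₀ hσ]
  have h1 := sigMin_mul_le W (fun j => ∑ j', Xᵀ j j' * u j') hσ.le
  have h2 : mq (W * Xᵀ) u ≤ opNorm (W * Xᵀ) := mq_le_opNorm _ hu
  have h3 : mq Xᵀ u = Real.sqrt (∑ j, (∑ j', Xᵀ j j' * u j') ^ 2) := rfl
  rw [mq_mul W X u] at h2
  calc mq Xᵀ u * sigMin W = sigMin W * Real.sqrt (∑ j, (∑ j', Xᵀ j j' * u j') ^ 2) := by
        rw [h3]; ring
    _ ≤ mq W (fun j => ∑ j', Xᵀ j j' * u j') := h1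
    _ ≤ opNorm (W * Xᵀ) := h2

end ReluAux

open ReluAux in
/-- For ReLU applied entrywise, `X ≠ 0`, and `W ∈ ℝ^{m×d}` of full rank `d` with `m ≥ d`:
`max(‖φ(WXᵀ)‖_F², ‖φ(−WXᵀ)‖_F²) / max(‖φ(WXᵀ)‖₂², ‖φ(−WXᵀ)‖₂²)
  ≤ 4 (‖W‖₂²/σ_min(W)²) Tr(XXᵀ)/λ₁(XXᵀ)`. -/
theorem outer_relu_max_bound
    (n d m : ℕ) (X : Matrix (Fin n) (Fin d) ℝ) (hX : X ≠ 0)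
    (W : Matrix (Fin m) (Fin d) ℝ) (hmd : d ≤ m) (hrank : W.rank = d) :
    max (frobSq (reluM (W * Xᵀ))) (frobSq (reluM (-(W * Xᵀ)))) /
        max (opNorm (reluM (W * Xᵀ)) ^ 2) (opNorm (reluM (-(W * Xᵀ))) ^ 2) ≤
      4 * (opNorm W ^ 2 / sigMin W ^ 2) * ((X * Xᵀ).trace / lamMax (X * Xᵀ)) := by
  classical
  have hex : ∃ i k, X i k ≠ 0 := by
    by_contra h
    push_neg at h
    exact hX (by ext i k; simpa using h i k)
  obtain ⟨i0, k0, hik⟩ := hex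
  haveI : NeZero n := ⟨i0.pos.ne'⟩
  haveI : NeZero d := ⟨k0.pos.ne'⟩
  set A := W * Xᵀ with hA
  set B := reluM A with hB
  set C := reluM (-A) with hC
  have hσ : 0 < sigMin W := sigMin_pos W hrank
  have hL : 0 < lamMax (X * Xᵀ) := lamMax_pos X i0 k0 hik
  -- numerator bound
  have hF : max (frobSq B) (frobSq C) ≤ opNorm W ^ 2 * (X * Xᵀ).trace := by
    apply max_le
    · exact le_trans (frob_relu_le A) (frobSq_mul_le W X)
    · exact le_trans (frob_relu_neg_le A) (frobSq_mul_le W X)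
  -- denominator bound
  have hOmax : 0 ≤ max (opNorm B) (opNorm C) :=
    le_trans (opNorm_nonneg B) (le_max_left _ _)
  have hstep1 : sigMin W * opNorm Xᵀ ≤ opNorm A := sig_op_le W X hσ
  have hstep2 : Real.sqrt (lamMax (X * Xᵀ)) ≤ opNorm Xᵀ := by
    have h1 : lamMax (X * Xᵀ) ≤ opNorm Xᵀ ^ 2 := lamMax_le_sq X
    have h2 := Real.sqrt_le_sqrt h1
    rwa [Real.sqrt_sq (le_trans (mq_nonneg Xᵀ _) (mq_le_opNorm Xᵀ (single_unit' 0)))] at h2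
  have hstep3 : opNorm A ≤ 2 * max (opNorm B) (opNorm C) := by
    calc opNorm A ≤ opNorm B + opNorm C := opNorm_relu_triangle A
      _ ≤ max (opNorm B) (opNorm C) + max (opNorm B) (opNorm C) :=
          add_le_add (le_max_left _ _) (le_max_right _ _)
      _ = 2 * max (opNorm B) (opNorm C) := by ring
  have hchain : sigMin W * Real.sqrt (lamMax (X * Xᵀ)) ≤ 2 * max (opNorm B) (opNorm C) := by
    calc sigMin W * Real.sqrt (lamMax (X * Xᵀ))
        ≤ sigMin W * opNorm Xᵀ := mul_le_mul_of_nonneg_left hstep2 hσ.le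
      _ ≤ opNorm A := hstep1
      _ ≤ 2 * max (opNorm B) (opNorm C) := hstep3
  have hO : sigMin W ^ 2 * lamMax (X * Xᵀ) / 4 ≤ max (opNorm B ^ 2) (opNorm C ^ 2) := by
    have hsq : (sigMin W * Real.sqrt (lamMax (X * Xᵀ))) ^ 2
        ≤ (2 * max (opNorm B) (opNorm C)) ^ 2 := by
      apply pow_le_pow_left₀ (by positivity) hchain
    have hleft : (sigMin W * Real.sqrt (lamMax (X * Xᵀ))) ^ 2
        = sigMin W ^ 2 * lamMax (X * Xᵀ) := by
      rw [mul_pow, Real.sq_sqrt hL.le]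
    have hright : (2 * max (opNorm B) (opNorm C)) ^ 2
        = 4 * (max (opNorm B) (opNorm C)) ^ 2 := by ring
    have hmaxsq : (max (opNorm B) (opNorm C)) ^ 2 ≤ max (opNorm B ^ 2) (opNorm C ^ 2) := by
      rcases le_total (opNorm B) (opNorm C) with h | h
      · rw [max_eq_right h]; exact le_max_right _ _
      · rw [max_eq_left h]; exact le_max_left _ _
    rw [hleft, hright] at hsq
    linarith
  have hden_pos : 0 < sigMin W ^ 2 * lamMax (X * Xᵀ) / 4 := by positivity
  have htr : 0 ≤ (X * Xᵀ).trace := by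
    rw [trace_eq]
    positivity
  have hnum_nonneg : 0 ≤ opNorm W ^ 2 * (X * Xᵀ).trace :=
    mul_nonneg (sq_nonneg _) htr
  have hmain := div_le_div₀ hnum_nonneg hF hden_pos hO
  refine le_trans hmain (le_of_eq ?_)
  field_simp
end
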